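/- arXiv:2002.08915 — 3 statements merged into one kernel-verified Lean document; each statement's English description precedes it below -/
import Mathlib

section
/- Let n ≥ 3 be an odd integer, m = (n+1)/2, [k]_n = ((k−1) mod n) + 1, and f(i,j) = (m−i)·(−1)^j + n(n−j) + m. Define h(i,j) = f(j,i) (the transposed indexing), and define the n×n matrix M by M_{i,j} = h((i+j)/2, (j−i)/2 + m) if i and j have the same parity, and M_{i,j} = h([(i+j+n)/2]_n, [(j−i+n)/2 + m]_n) otherwise. Then M is a normal magic square of subtraction of order n with residuum (n²+1)/2. -/
/-- Residuum of a finite sequence of integers: sort in decreasing order and take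
the alternating sum `x̃₁ - x̃₂ + x̃₃ - …`. -/
def res (l : List ℤ) : ℤ := (l.insertionSort (· ≥ ·)).alternatingSum

/-- The `i`-th row `(M i 1, …, M i n)` of an `n × n` matrix given with 1-based indices. -/
def rowList (n : ℕ) (M : ℕ → ℕ → ℤ) (i : ℕ) : List ℤ :=
  (List.range n).map fun j => M i (j + 1)

/-- The `j`-th column `(M 1 j, …, M n j)`. -/
def colList (n : ℕ) (M : ℕ → ℕ → ℤ) (j : ℕ) : List ℤ :=
  (List.range n).map fun i => M (i + 1) j

/-- The main diagonal `(M 1 1, …, M n n)`. -/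
def diagList (n : ℕ) (M : ℕ → ℕ → ℤ) : List ℤ :=
  (List.range n).map fun i => M (i + 1) (i + 1)

/-- The antidiagonal `(M 1 n, M 2 (n-1), …, M n 1)`, i.e. entries `M i (n+1-i)`. -/
def adiagList (n : ℕ) (M : ℕ → ℕ → ℤ) : List ℤ :=
  (List.range n).map fun i => M (i + 1) (n - i)

/-- `M` (on indices `1..n`) is a normal magic square of subtraction of order `n`
with residuum `r`: its entries are exactly the integers `1,…,n²`, each occurring
once, and every row, every column, the main diagonal and the antidiagonal all
have residuum `r`. -/
def IsMagicSubSquare (n : ℕ) (M : ℕ → ℕ → ℤ) (r : ℤ) : Prop :=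
  ((Finset.Icc 1 n ×ˢ Finset.Icc 1 n).val.map fun p => M p.1 p.2)
      = (Finset.Icc (1 : ℤ) ((n : ℤ) ^ 2)).val ∧
  (∀ i ∈ Finset.Icc 1 n, res (rowList n M i) = r) ∧
  (∀ j ∈ Finset.Icc 1 n, res (colList n M j) = r) ∧
  res (diagList n M) = r ∧
  res (adiagList n M) = r

/-- `[k]_n = ((k-1) mod n) + 1 ∈ {1,…,n}`. -/
def wrap (n k : ℤ) : ℤ := (k - 1) % n + 1

/-- Kochański's indexing function `f(i,j) = (m-i)·(-1)^j + n(n-j) + m`. -/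
def koch (n m i j : ℤ) : ℤ := (m - i) * (if Even j then 1 else -1) + n * (n - j) + m

/-- Kochański's matrix: `M i j = f((i+j)/2, (j-i)/2 + m)` when `i, j` have the same
parity, and `M i j = f([(i+j+n)/2]_n, [(j-i+n)/2 + m]_n)` otherwise. -/
def kochM (n m i j : ℤ) : ℤ :=
  if Even (i + j) then koch n m ((i + j) / 2) ((j - i) / 2 + m)
  else koch n m (wrap n ((i + j + n) / 2)) (wrap n ((j - i + n) / 2 + m))



lemma wrap_mem {n : ℤ} (hn : 0 < n) (k : ℤ) : 1 ≤ wrap n k ∧ wrap n k ≤ n := by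
  unfold wrap
  have h1 := Int.emod_nonneg (k - 1) (ne_of_gt hn)
  have h2 := Int.emod_lt_of_pos (k - 1) hn
  omega

lemma wrap_modeq (n k : ℤ) : wrap n k ≡ k [ZMOD n] := by
  unfold wrap
  have h : (k - 1) % n ≡ k - 1 [ZMOD n] := Int.emod_emod_of_dvd (k - 1) dvd_rfl
  have := h.add_right 1
  simpa using this

lemma wrap_eq {n k : ℤ} (h1 : 1 ≤ k) (h2 : k ≤ n) : wrap n k = k := by
  unfold wrap
  rw [Int.emod_eq_of_lt (by omega) (by omega)]
  ring

lemma wrap_congr {n k k' : ℤ} (h : k ≡ k' [ZMOD n]) : wrap n k = wrap n k' := by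
  unfold wrap
  have : k - 1 ≡ k' - 1 [ZMOD n] := h.sub_right 1
  rw [Int.ModEq] at this
  omega

lemma modeq_eq {n x y : ℤ} (hn : 0 < n) (h : x ≡ y [ZMOD n])
    (h1 : -n < x - y) (h2 : x - y < n) : x = y := by
  have hd : n ∣ y - x := h.dvd
  have := Int.eq_zero_of_abs_lt_dvd hd (abs_lt.2 ⟨by omega, by omega⟩)
  omega

lemma two_cancel {n x y : ℤ} (hodd : Odd n) (h : 2 * x ≡ 2 * y [ZMOD n]) :
    x ≡ y [ZMOD n] := by
  have hd : n ∣ 2 * (y - x) := by have := h.dvd; rw [show 2*y - 2*x = 2*(y-x) by ring] at this; exact this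
  obtain ⟨c, hc⟩ := hd
  have hceven : Even c := by
    rcases Int.even_or_odd c with hc' | hc'
    · exact hc'
    · exfalso
      have hoddp : Odd (n * c) := hodd.mul hc'
      rw [← hc] at hoddp
      exact (Int.not_odd_iff_even.2 ⟨y - x, by ring⟩) hoddp
  obtain ⟨d, hd⟩ := hceven
  subst hd
  have h2 : 2 * (y - x) = 2 * (n * d) := by linear_combination hc
  exact Int.modEq_iff_dvd.2 ⟨d, mul_left_cancel₀ two_ne_zero h2⟩


lemma map_val_eq {α : Type*} (s : Finset α) {T : Finset ℤ} (F : α → ℤ)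
    (hmem : ∀ a ∈ s, F a ∈ T)
    (hinj : ∀ a ∈ s, ∀ b ∈ s, F a = F b → a = b)
    (hcard : T.card = s.card) :
    s.val.map F = T.val := by
  have hnd : (s.val.map F).Nodup := s.nodup.map_on hinj
  let S : Finset ℤ := ⟨s.val.map F, hnd⟩
  have hsub : S ⊆ T := by
    intro x hx
    obtain ⟨a, ha, rfl⟩ := Multiset.mem_map.1 hx
    exact hmem a ha
  have hST : S = T := Finset.eq_of_subset_of_card_le hsub
    (by simp [S, hcard])
  exact congrArg Finset.val hST

lemma map_range_val_eq {k : ℕ} {T : Finset ℤ} (τ : ℕ → ℤ)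
    (hmem : ∀ t < k, τ t ∈ T)
    (hinj : ∀ t < k, ∀ s < k, τ t = τ s → t = s)
    (hcard : T.card = k) :
    (Multiset.range k).map τ = T.val := by
  have := map_val_eq (Finset.range k) τ
    (fun a ha => hmem a (Finset.mem_range.1 ha))
    (fun a ha b hb => hinj a (Finset.mem_range.1 ha) b (Finset.mem_range.1 hb))
    (by simpa using hcard)
  simpa using this

lemma altSum_map_range (f : ℕ → ℤ) (k : ℕ) :
    ((List.range k).map f).alternatingSum = ∑ t ∈ Finset.range k, (-1 : ℤ)^t * f t := by
  induction k generalizing f with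
  | zero => simp
  | succ k ih =>
    rw [List.range_succ_eq_map, List.map_cons, List.alternatingSum_cons, List.map_map,
      Finset.sum_range_succ']
    have := ih (f ∘ Nat.succ)
    simp only [Function.comp] at this ⊢
    rw [this]
    have h2 : ∑ x ∈ Finset.range k, (-1 : ℤ)^(x+1) * f (x+1)
        = -1 * ∑ x ∈ Finset.range k, (-1 : ℤ)^x * f (x+1) := by
      rw [Finset.mul_sum]; exact Finset.sum_congr rfl fun x _ => by ring
    rw [h2]; ring

lemma alt_one (k : ℕ) : ∑ t ∈ Finset.range k, (-1 : ℤ)^t = if Even k then 0 else 1 := by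
  induction k with
  | zero => simp
  | succ k ih =>
    rw [Finset.sum_range_succ, ih]
    rcases Nat.even_or_odd k with h | h
    · simp [h, Nat.even_add_one, h.neg_one_pow]
    · simp [Nat.even_add_one, Nat.not_even_iff_odd.2 h, h.neg_one_pow]

lemma alt_t (k : ℕ) : 2 * ∑ t ∈ Finset.range k, (-1 : ℤ)^t * t
    = if Even k then -(k : ℤ) else (k : ℤ) - 1 := by
  induction k with
  | zero => simp
  | succ k ih =>
    rw [Finset.sum_range_succ, mul_add, ih]
    rcases Nat.even_or_odd k with h | h
    · rw [if_pos h, if_neg (by simp [Nat.even_add_one, h]), h.neg_one_pow]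
      push_cast; ring
    · rw [if_neg (Nat.not_even_iff_odd.2 h),
        if_pos (by simpa [Nat.even_add_one] using Nat.not_even_iff_odd.2 h), h.neg_one_pow]
      push_cast; ring

lemma koch_bounds {n m a b : ℤ} (hm : 2 * m = n + 1) (ha1 : 1 ≤ a) (ha2 : a ≤ n) :
    n * (n - b) + 1 ≤ koch n m a b ∧ koch n m a b ≤ n * (n - b) + n := by
  unfold koch
  set C := n * (n - b) with hC
  split <;> constructor <;> nlinarith

lemma koch_inj {n m a b a' b' : ℤ} (hm : 2 * m = n + 1) (hn : 0 < n)
    (ha : 1 ≤ a ∧ a ≤ n) (hb : 1 ≤ b ∧ b ≤ n) (ha' : 1 ≤ a' ∧ a' ≤ n) (hb' : 1 ≤ b' ∧ b' ≤ n)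
    (h : koch n m a b = koch n m a' b') : a = a' ∧ b = b' := by
  obtain ⟨h1, h2⟩ := koch_bounds hm ha.1 ha.2 (b := b)
  obtain ⟨h1', h2'⟩ := koch_bounds hm ha'.1 ha'.2 (b := b')
  have hd : n * (b' - b) = n * (n - b) - n * (n - b') := by ring
  have hbb : b = b' := by
    have h0 : n * (b' - b) = 0 := by
      refine Int.eq_zero_of_abs_lt_dvd ⟨b' - b, rfl⟩ (abs_lt.2 ⟨?_, ?_⟩) <;> linarith
    have := mul_eq_zero.1 h0
    omega
  subst hbb
  refine ⟨?_, rfl⟩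
  unfold koch at h
  split at h <;> nlinarith

def Bfun (n i j : ℤ) : ℤ := if Even (i + j) then (i + j) / 2 else wrap n ((i + j + n) / 2)

lemma Bfun_mem {n i j : ℤ} (hn : 0 < n) (hi1 : 1 ≤ i) (hi2 : i ≤ n) (hj1 : 1 ≤ j) (hj2 : j ≤ n) :
    1 ≤ Bfun n i j ∧ Bfun n i j ≤ n := by
  unfold Bfun
  split
  · rename_i h
    obtain ⟨c, hc⟩ := h
    omega
  · exact wrap_mem hn _

lemma Bfun_spec {n i j : ℤ} (hodd : Odd n) : 2 * Bfun n i j ≡ i + j [ZMOD n] := by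
  unfold Bfun
  split
  · rename_i h
    obtain ⟨c, hc⟩ := h
    have : (i + j) / 2 = c := by omega
    rw [this]
    have : 2 * c = i + j := by omega
    rw [this]
  · rename_i h
    have he : Even (i + j + n) := by
      rcases Int.even_or_odd (i + j) with h' | h'
      · exact absurd h' h
      · exact h'.add_odd hodd
    obtain ⟨c, hc⟩ := he
    have h1 : (i + j + n) / 2 = c := by omega
    rw [h1]
    calc 2 * wrap n c ≡ 2 * c [ZMOD n] := (wrap_modeq n c).mul_left 2
      _ = i + j + n := by omega
      _ ≡ i + j [ZMOD n] := by
          refine Int.modEq_iff_dvd.2 ⟨-1, by ring⟩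

lemma blockList_sorted {n : ℕ} {m : ℤ} (hm : 2 * m = (n:ℤ) + 1) (a : ℕ → ℤ)
    (hmem : ∀ t, t < n → 1 ≤ a t ∧ a t ≤ (n:ℤ)) :
    ((List.range n).map fun t => koch (n:ℤ) m (a t) ((t:ℤ)+1)).Pairwise (· ≥ ·) := by
  rw [List.pairwise_map]
  refine (List.pairwise_lt_range (n := n)).imp_of_mem ?_
  intro t s ht hs hts
  have ht' := List.mem_range.1 ht
  have hs' := List.mem_range.1 hs
  obtain ⟨h1, h2⟩ := koch_bounds (b := (t:ℤ)+1) hm (hmem t ht').1 (hmem t ht').2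
  obtain ⟨h1', h2'⟩ := koch_bounds (b := (s:ℤ)+1) hm (hmem s hs').1 (hmem s hs').2
  have e : (n:ℤ) * ((n:ℤ) - ((s:ℤ)+1)) + n = (n:ℤ) * ((n:ℤ) - (s:ℤ)) := by ring
  have hns : (n:ℤ) - (s:ℤ) ≤ (n:ℤ) - ((t:ℤ)+1) := by omega
  have key := mul_le_mul_of_nonneg_left hns (show (0:ℤ) ≤ (n:ℤ) by positivity)
  simp only [ge_iff_le]
  linarith

lemma blockList_alt {n : ℕ} {m : ℤ} (hodd : Odd n) (hm : 2 * m = (n:ℤ) + 1) (a : ℕ → ℤ)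
    (hsum : ∑ t ∈ Finset.range n, a t = (n:ℤ) * m) :
    ((List.range n).map fun t => koch (n:ℤ) m (a t) ((t:ℤ)+1)).alternatingSum
      = (n:ℤ) * (m - 1) + m := by
  rw [altSum_map_range]
  have step : ∀ t ∈ Finset.range n, (-1:ℤ)^t * koch (n:ℤ) m (a t) ((t:ℤ)+1)
      = (a t - m) + ((((n:ℤ)*((n:ℤ)-1) + m) * (-1)^t) - (n:ℤ) * ((-1)^t * (t:ℤ))) := by
    intro t _
    unfold koch
    rcases Nat.even_or_odd t with h | h
    · have h' : Even ((t:ℤ)) := by exact_mod_cast h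
      rw [if_neg (by simp [Int.even_add_one, h', h]), h.neg_one_pow]
      ring
    · have h' : ¬ Even ((t:ℤ)) := by
        simpa [Int.even_coe_nat] using Nat.not_even_iff_odd.2 h
      rw [if_pos ((Int.even_add_one).2 h'), h.neg_one_pow]
      ring
  rw [Finset.sum_congr rfl step, Finset.sum_add_distrib, Finset.sum_sub_distrib,
    Finset.sum_sub_distrib, ← Finset.mul_sum, ← Finset.mul_sum, hsum,
    Finset.sum_const, Finset.card_range, nsmul_eq_mul, alt_one,
    if_neg (Nat.not_even_iff_odd.2 hodd)]
  have h2 := alt_t n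
  rw [if_neg (Nat.not_even_iff_odd.2 hodd)] at h2
  have hS2 : ∑ t ∈ Finset.range n, (-1:ℤ)^t * (t:ℤ) = m - 1 := by omega
  rw [hS2]
  linear_combination (-(n:ℤ)) * hm

lemma res_eq_of_perm_sorted {L S : List ℤ} (hp : L.Perm S) (hs : S.Pairwise (· ≥ ·)) :
    res L = S.alternatingSum := by
  unfold res
  congr 1
  exact List.Perm.eq_of_pairwise'
    (List.pairwise_insertionSort (· ≥ ·) L) hs ((L.perm_insertionSort (· ≥ ·)).trans hp)

lemma sum_of_inj {n : ℕ} {m : ℤ} (hn : 0 < n) (hm : 2 * m = (n:ℤ) + 1) (τ : ℕ → ℤ)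
    (hmem : ∀ t, t < n → 1 ≤ τ t ∧ τ t ≤ (n:ℤ))
    (hinj : ∀ t, t < n → ∀ s, s < n → τ t = τ s → t = s) :
    ∑ t ∈ Finset.range n, τ t = (n:ℤ) * m := by
  have hcard : (Finset.Icc (1:ℤ) (n:ℤ)).card = n := by
    rw [Int.card_Icc]; simp
  have h1 : (Multiset.range n).map τ = (Finset.Icc (1:ℤ) (n:ℤ)).val :=
    map_range_val_eq τ
      (fun t ht => Finset.mem_Icc.2 ⟨(hmem t ht).1, (hmem t ht).2⟩) hinj hcard
  have h0 : (Multiset.range n).map (fun (t : ℕ) => ((t:ℤ) + 1)) = (Finset.Icc (1:ℤ) (n:ℤ)).val :=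
    map_range_val_eq (fun (t : ℕ) => ((t:ℤ) + 1))
      (fun t ht => by simp only [Finset.mem_Icc]; omega)
      (fun t _ s _ h => by have h' : (t:ℤ) + 1 = (s:ℤ) + 1 := h; omega) hcard
  have hsum : ∑ t ∈ Finset.range n, τ t = ∑ t ∈ Finset.range n, ((t:ℤ) + 1) := by
    rw [Finset.sum, Finset.sum, Finset.range_val, h1, h0]
  obtain ⟨k, rfl⟩ : ∃ k, n = k + 1 := ⟨n - 1, by omega⟩
  have g : (∑ i ∈ Finset.range (k+1), (i:ℤ)) * 2 = ((k:ℤ) + 1) * (k:ℤ) := by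
    have h' := Finset.sum_range_id_mul_two (k+1)
    simp only [Nat.add_sub_cancel] at h'
    push_cast at h'
    linarith
  have hplus : ∑ t ∈ Finset.range (k+1), ((t:ℤ) + 1)
      = (∑ t ∈ Finset.range (k+1), (t:ℤ)) + ((k:ℤ) + 1) := by
    rw [Finset.sum_add_distrib, Finset.sum_const, Finset.card_range, nsmul_eq_mul]
    push_cast; ring
  push_cast at hm ⊢
  have h2 : 2 * (∑ t ∈ Finset.range (k+1), τ t) = 2 * (((k:ℤ) + 1) * m) := by
    rw [hsum, hplus]
    linear_combination g - ((k:ℤ) + 1) * hm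
  exact mul_left_cancel₀ (show (2:ℤ) ≠ 0 by norm_num) h2

section Entry

variable {n : ℕ} {m : ℤ} {M : ℕ → ℕ → ℤ}

lemma entry (hodd : Odd n) (hn3 : 3 ≤ n) (hm : 2 * m = (n:ℤ) + 1)
    (hM : ∀ i j : ℕ, M i j =
      if Even ((i : ℤ) + (j : ℤ)) then
        koch (n : ℤ) m (((j : ℤ) - (i : ℤ)) / 2 + m) (((i : ℤ) + (j : ℤ)) / 2)
      else
        koch (n : ℤ) m (wrap (n : ℤ) (((j : ℤ) - (i : ℤ) + (n : ℤ)) / 2 + m))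
          (wrap (n : ℤ) (((i : ℤ) + (j : ℤ) + (n : ℤ)) / 2)))
    {i j : ℕ} (hi1 : 1 ≤ i) (hi2 : i ≤ n) (hj1 : 1 ≤ j) (hj2 : j ≤ n) :
    M i j = koch (n:ℤ) m (wrap (n:ℤ) (Bfun (n:ℤ) (i:ℤ) (j:ℤ) - (i:ℤ) + m))
      (Bfun (n:ℤ) (i:ℤ) (j:ℤ)) := by
  have hoddZ : Odd ((n:ℤ)) := by exact_mod_cast hodd
  rw [hM i j]
  unfold Bfun
  split
  · rename_i h
    obtain ⟨c, hc⟩ := h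
    have harg : ((i:ℤ) + (j:ℤ)) / 2 - (i:ℤ) + m = ((j:ℤ) - (i:ℤ)) / 2 + m := by omega
    rw [harg, wrap_eq (by omega) (by omega)]
  · rename_i h
    have he : Even ((i:ℤ) + (j:ℤ) + (n:ℤ)) := by
      rcases Int.even_or_odd ((i:ℤ) + (j:ℤ)) with h' | h'
      · exact absurd h' h
      · exact h'.add_odd hoddZ
    obtain ⟨c, hc⟩ := he
    congr 1
    apply wrap_congr
    have h1 : ((i:ℤ) + (j:ℤ) + (n:ℤ)) / 2 = c := by omega
    refine Int.ModEq.symm ?_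
    calc wrap (n:ℤ) (((i:ℤ) + (j:ℤ) + (n:ℤ)) / 2) - (i:ℤ) + m
        ≡ ((i:ℤ) + (j:ℤ) + (n:ℤ)) / 2 - (i:ℤ) + m [ZMOD (n:ℤ)] :=
          ((wrap_modeq _ _).sub_right _).add_right _
      _ = ((j:ℤ) - (i:ℤ) + (n:ℤ)) / 2 + m := by omega

lemma entry_col (hodd : Odd n) (hn3 : 3 ≤ n) (hm : 2 * m = (n:ℤ) + 1)
    (hM : ∀ i j : ℕ, M i j =
      if Even ((i : ℤ) + (j : ℤ)) then
        koch (n : ℤ) m (((j : ℤ) - (i : ℤ)) / 2 + m) (((i : ℤ) + (j : ℤ)) / 2)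
      else
        koch (n : ℤ) m (wrap (n : ℤ) (((j : ℤ) - (i : ℤ) + (n : ℤ)) / 2 + m))
          (wrap (n : ℤ) (((i : ℤ) + (j : ℤ) + (n : ℤ)) / 2)))
    {i j : ℕ} (hi1 : 1 ≤ i) (hi2 : i ≤ n) (hj1 : 1 ≤ j) (hj2 : j ≤ n) :
    M i j = koch (n:ℤ) m (wrap (n:ℤ) ((j:ℤ) - Bfun (n:ℤ) (i:ℤ) (j:ℤ) + m))
      (Bfun (n:ℤ) (i:ℤ) (j:ℤ)) := by
  have hoddZ : Odd ((n:ℤ)) := by exact_mod_cast hodd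
  rw [entry hodd hn3 hm hM hi1 hi2 hj1 hj2]
  congr 1
  apply wrap_congr
  have hs : 2 * Bfun (n:ℤ) (i:ℤ) (j:ℤ) ≡ (i:ℤ) + (j:ℤ) [ZMOD (n:ℤ)] := Bfun_spec hoddZ
  have hd : (n:ℤ) ∣ ((i:ℤ) + (j:ℤ)) - 2 * Bfun (n:ℤ) (i:ℤ) (j:ℤ) := hs.dvd
  obtain ⟨c, hc⟩ := hd
  exact Int.modEq_iff_dvd.2 ⟨c, by omega⟩

end Entry

lemma res_generic {n : ℕ} {m : ℤ} (hn3 : 3 ≤ n) (hodd : Odd n) (hm : 2 * m = (n:ℤ) + 1)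
    (L : List ℤ) (τ : ℕ → ℤ) (e c : ℤ) (he : e = 1 ∨ e = -1)
    (hL : L = (List.range n).map
      (fun j => koch (n:ℤ) m (wrap (n:ℤ) (e * τ j + c)) (τ j)))
    (hτmem : ∀ t, t < n → 1 ≤ τ t ∧ τ t ≤ (n:ℤ))
    (hτinj : ∀ t, t < n → ∀ s, s < n → τ t = τ s → t = s) :
    res L = (n:ℤ) * (m - 1) + m := by
  have hn0 : 0 < (n:ℤ) := by omega
  set a : ℕ → ℤ := fun t => wrap (n:ℤ) (e * ((t:ℤ) + 1) + c) with ha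
  have hamem : ∀ t, t < n → 1 ≤ a t ∧ a t ≤ (n:ℤ) := fun t _ => wrap_mem hn0 _
  have hainj : ∀ t, t < n → ∀ s, s < n → a t = a s → t = s := by
    intro t ht s hs h
    have h' : wrap (n:ℤ) (e * ((t:ℤ) + 1) + c) = wrap (n:ℤ) (e * ((s:ℤ) + 1) + c) := h
    have h1 : e * ((t:ℤ) + 1) + c ≡ e * ((s:ℤ) + 1) + c [ZMOD (n:ℤ)] :=
      ((wrap_modeq (n:ℤ) _).symm.trans (h' ▸ wrap_modeq (n:ℤ) _))
    have h2 : (t:ℤ) ≡ (s:ℤ) [ZMOD (n:ℤ)] := by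
      rcases he with rfl | rfl
      · have := (h1.sub_right c).sub_right 1
        simpa using this
      · have := (h1.sub_right c).neg.add_right (-1)
        have h3 : (t:ℤ) ≡ (s:ℤ) [ZMOD (n:ℤ)] := by
          have e1 : -(-1 * ((t:ℤ) + 1) + c - c) + -1 = (t:ℤ) := by ring
          have e2 : -(-1 * ((s:ℤ) + 1) + c - c) + -1 = (s:ℤ) := by ring
          rwa [e1, e2] at this
        exact h3
    have := modeq_eq hn0 h2 (by omega) (by omega)
    omega
  have hsum : ∑ t ∈ Finset.range n, a t = (n:ℤ) * m :=
    sum_of_inj (by omega) hm a hamem hainj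
  set g : ℤ → ℤ := fun b => koch (n:ℤ) m (wrap (n:ℤ) (e * b + c)) b with hg
  have hperm : L.Perm ((List.range n).map fun t => koch (n:ℤ) m (a t) ((t:ℤ)+1)) := by
    rw [← Multiset.coe_eq_coe, hL, ← Multiset.map_coe, ← Multiset.map_coe]
    show Multiset.map (fun j => g (τ j)) (Multiset.range n)
      = Multiset.map (fun (t : ℕ) => g ((t:ℤ) + 1)) (Multiset.range n)
    have hcard : (Finset.Icc (1:ℤ) (n:ℤ)).card = n := by rw [Int.card_Icc]; simp
    have h1 : (Multiset.range n).map τ = (Finset.Icc (1:ℤ) (n:ℤ)).val :=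
      map_range_val_eq τ
        (fun t ht => Finset.mem_Icc.2 ⟨(hτmem t ht).1, (hτmem t ht).2⟩) hτinj hcard
    have h0 : (Multiset.range n).map (fun (t:ℕ) => ((t:ℤ) + 1)) = (Finset.Icc (1:ℤ) (n:ℤ)).val :=
      map_range_val_eq (fun (t:ℕ) => ((t:ℤ) + 1))
        (fun t ht => by simp only [Finset.mem_Icc]; omega)
        (fun t _ s _ h => by have h' : (t:ℤ) + 1 = (s:ℤ) + 1 := h; omega) hcard
    calc Multiset.map (fun j => g (τ j)) (Multiset.range n)
        = Multiset.map g ((Multiset.range n).map τ) := by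
          rw [Multiset.map_map]; rfl
      _ = Multiset.map g ((Multiset.range n).map (fun (t:ℕ) => ((t:ℤ) + 1))) := by
          rw [h1, h0]
      _ = Multiset.map (fun (t : ℕ) => g ((t:ℤ) + 1)) (Multiset.range n) := by
          rw [Multiset.map_map]; rfl
  rw [res_eq_of_perm_sorted hperm (blockList_sorted hm a hamem),
    blockList_alt hodd hm a hsum]

lemma res_adiag {n : ℕ} {m : ℤ} {M : ℕ → ℕ → ℤ} (hodd : Odd n) (hn3 : 3 ≤ n)
    (hm : 2 * m = (n:ℤ) + 1)
    (hM : ∀ i j : ℕ, M i j =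
      if Even ((i : ℤ) + (j : ℤ)) then
        koch (n : ℤ) m (((j : ℤ) - (i : ℤ)) / 2 + m) (((i : ℤ) + (j : ℤ)) / 2)
      else
        koch (n : ℤ) m (wrap (n : ℤ) (((j : ℤ) - (i : ℤ) + (n : ℤ)) / 2 + m))
          (wrap (n : ℤ) (((i : ℤ) + (j : ℤ) + (n : ℤ)) / 2))) :
    res (adiagList n M) = (n:ℤ) * (m - 1) + m := by
  have hn0 : 0 < (n:ℤ) := by omega
  have hstep : ∀ t, t < n → M (t+1) (n - t) = koch (n:ℤ) m ((n:ℤ) - (t:ℤ)) m := by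
    intro t ht
    have hj : ((n - t : ℕ) : ℤ) = (n:ℤ) - (t:ℤ) := by omega
    rw [entry hodd hn3 hm hM (by omega) (by omega) (by omega) (by omega)]
    have hB : Bfun (n:ℤ) ((t+1 : ℕ) : ℤ) ((n - t : ℕ) : ℤ) = m := by
      unfold Bfun
      rw [if_pos (by push_cast [hj]; exact ⟨m, by omega⟩)]
      push_cast [hj]
      omega
    rw [hB]
    congr 1
    have : m - ((t:ℕ)+1 : ℕ) + m = (n:ℤ) - (t:ℤ) := by push_cast; omega
    rw [this, wrap_eq (by omega) (by omega)]
  set E : ℤ := if Even m then 1 else -1 with hE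
  have hEpm : E = 1 ∨ E = -1 := by unfold E; split <;> simp
  have hkoch : ∀ t : ℕ, koch (n:ℤ) m ((n:ℤ) - (t:ℤ)) m
      = (n:ℤ) * ((n:ℤ) - m) + ((m - ((n:ℤ) - (t:ℤ))) * E + m) := by
    intro t; unfold koch; rw [← hE]; ring
  set c : ℕ → ℤ := fun t => (m - ((n:ℤ) - (t:ℤ))) * E + m with hc
  have hcmem : ∀ t, t < n → 1 ≤ c t ∧ c t ≤ (n:ℤ) := by
    intro t ht
    have hct : c t = (m - ((n:ℤ) - (t:ℤ))) * E + m := rfl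
    rcases hEpm with h | h <;> rw [h] at hct <;> rw [hct] <;> constructor <;> omega
  have hcinj : ∀ t, t < n → ∀ s, s < n → c t = c s → t = s := by
    intro t ht s hs h
    have h' : (m - ((n:ℤ) - (t:ℤ))) * E + m = (m - ((n:ℤ) - (s:ℤ))) * E + m := h
    rcases hEpm with hE1 | hE1 <;> rw [hE1] at h' <;> omega
  have hcard : (Finset.Icc (1:ℤ) (n:ℤ)).card = n := by rw [Int.card_Icc]; simp
  have h1 : (Multiset.range n).map c = (Finset.Icc (1:ℤ) (n:ℤ)).val :=
    map_range_val_eq c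
      (fun t ht => Finset.mem_Icc.2 ⟨(hcmem t ht).1, (hcmem t ht).2⟩) hcinj hcard
  have h0 : (Multiset.range n).map (fun (t:ℕ) => (n:ℤ) - (t:ℤ)) = (Finset.Icc (1:ℤ) (n:ℤ)).val :=
    map_range_val_eq (fun (t:ℕ) => (n:ℤ) - (t:ℤ))
      (fun t ht => by simp only [Finset.mem_Icc]; omega)
      (fun t _ s _ h => by have h' : (n:ℤ) - (t:ℤ) = (n:ℤ) - (s:ℤ) := h; omega) hcard
  set S2 : List ℤ :=
    (List.range n).map (fun (t:ℕ) => (n:ℤ) * ((n:ℤ) - m) + ((n:ℤ) - (t:ℤ))) with hS2def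
  have hperm : (adiagList n M).Perm S2 := by
    rw [← Multiset.coe_eq_coe, hS2def]
    unfold adiagList
    rw [← Multiset.map_coe, ← Multiset.map_coe]
    calc Multiset.map (fun t => M (t+1) (n-t)) (Multiset.range n)
        = Multiset.map (fun (t:ℕ) => (n:ℤ)*((n:ℤ)-m) + c t) (Multiset.range n) :=
          Multiset.map_congr rfl (fun t ht => by
            rw [hstep t (Multiset.mem_range.1 ht), hkoch t])
      _ = Multiset.map ((fun v => (n:ℤ)*((n:ℤ)-m) + v) ∘ c) (Multiset.range n) := rfl
      _ = Multiset.map (fun v => (n:ℤ)*((n:ℤ)-m) + v) ((Multiset.range n).map c) :=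
          (Multiset.map_map _ _ _).symm
      _ = Multiset.map (fun v => (n:ℤ)*((n:ℤ)-m) + v)
            ((Multiset.range n).map (fun (t:ℕ) => (n:ℤ) - (t:ℤ))) := by rw [h1, h0]
      _ = Multiset.map (fun (t:ℕ) => (n:ℤ)*((n:ℤ)-m) + ((n:ℤ) - (t:ℤ))) (Multiset.range n) := by
          rw [Multiset.map_map]; rfl
  have hsorted : S2.Pairwise (· ≥ ·) := by
    rw [hS2def, List.pairwise_map]
    refine (List.pairwise_lt_range (n := n)).imp_of_mem ?_
    intro t s _ _ hts
    simp only [ge_iff_le, add_le_add_iff_left]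
    omega
  have halt : S2.alternatingSum = (n:ℤ) * (m - 1) + m := by
    rw [hS2def, altSum_map_range]
    have step : ∀ t ∈ Finset.range n, (-1:ℤ)^t * ((n:ℤ)*((n:ℤ)-m) + ((n:ℤ) - (t:ℤ)))
        = ((n:ℤ)*((n:ℤ)-m)+(n:ℤ))*(-1:ℤ)^t - (-1:ℤ)^t*(t:ℤ) := fun t _ => by ring
    rw [Finset.sum_congr rfl step, Finset.sum_sub_distrib, ← Finset.mul_sum, alt_one,
      if_neg (Nat.not_even_iff_odd.2 hodd)]
    have h2 := alt_t n
    rw [if_neg (Nat.not_even_iff_odd.2 hodd)] at h2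
    have hS2' : ∑ t ∈ Finset.range n, (-1:ℤ)^t * (t:ℤ) = m - 1 := by omega
    rw [hS2']
    linear_combination (-(n:ℤ)-1) * hm
  rw [res_eq_of_perm_sorted hperm hsorted, halt]

lemma res_diag {n : ℕ} {m : ℤ} {M : ℕ → ℕ → ℤ} (hodd : Odd n) (hn3 : 3 ≤ n)
    (hm : 2 * m = (n:ℤ) + 1)
    (hM : ∀ i j : ℕ, M i j =
      if Even ((i : ℤ) + (j : ℤ)) then
        koch (n : ℤ) m (((j : ℤ) - (i : ℤ)) / 2 + m) (((i : ℤ) + (j : ℤ)) / 2)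
      else
        koch (n : ℤ) m (wrap (n : ℤ) (((j : ℤ) - (i : ℤ) + (n : ℤ)) / 2 + m))
          (wrap (n : ℤ) (((i : ℤ) + (j : ℤ) + (n : ℤ)) / 2))) :
    res (diagList n M) = (n:ℤ) * (m - 1) + m := by
  have heq : diagList n M = (List.range n).map
      (fun t => koch (n:ℤ) m ((fun _ : ℕ => m) t) ((t:ℤ)+1)) := by
    unfold diagList
    refine List.map_congr_left ?_
    intro t ht
    have ht' := List.mem_range.1 ht
    rw [entry hodd hn3 hm hM (by omega) (by omega) (by omega) (by omega)]
    have hB : Bfun (n:ℤ) ((t+1 : ℕ) : ℤ) ((t+1 : ℕ) : ℤ) = ((t:ℤ) + 1) := by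
      unfold Bfun
      rw [if_pos ⟨((t:ℕ)+1 : ℕ), by push_cast; ring⟩]
      push_cast
      omega
    rw [hB]
    congr 1
    have harg : ((t:ℤ) + 1) - ((t+1 : ℕ) : ℤ) + m = m := by push_cast; ring
    rw [harg, wrap_eq (by omega) (by omega)]
  have hsum : ∑ _t ∈ Finset.range n, m = (n:ℤ) * m := by
    rw [Finset.sum_const, Finset.card_range, nsmul_eq_mul]
  rw [res_eq_of_perm_sorted (List.Perm.of_eq heq)
    (blockList_sorted hm (fun _ => m) (fun t _ => by show 1 ≤ m ∧ m ≤ (n:ℤ); omega)),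
    blockList_alt hodd hm (fun _ => m) hsum]

lemma normality {n : ℕ} {m : ℤ} {M : ℕ → ℕ → ℤ} (hodd : Odd n) (hn3 : 3 ≤ n)
    (hm : 2 * m = (n:ℤ) + 1)
    (hM : ∀ i j : ℕ, M i j =
      if Even ((i : ℤ) + (j : ℤ)) then
        koch (n : ℤ) m (((j : ℤ) - (i : ℤ)) / 2 + m) (((i : ℤ) + (j : ℤ)) / 2)
      else
        koch (n : ℤ) m (wrap (n : ℤ) (((j : ℤ) - (i : ℤ) + (n : ℤ)) / 2 + m))
          (wrap (n : ℤ) (((i : ℤ) + (j : ℤ) + (n : ℤ)) / 2))) :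
    ((Finset.Icc 1 n ×ˢ Finset.Icc 1 n).val.map fun p => M p.1 p.2)
      = (Finset.Icc (1 : ℤ) ((n : ℤ) ^ 2)).val := by
  have hn0 : 0 < (n:ℤ) := by omega
  have hoddZ : Odd ((n:ℤ)) := by exact_mod_cast hodd
  apply map_val_eq
  · intro p hp
    obtain ⟨hp1, hp2⟩ := Finset.mem_product.1 hp
    rw [Finset.mem_Icc] at hp1 hp2
    rw [entry hodd hn3 hm hM hp1.1 hp1.2 hp2.1 hp2.2]
    have hB := Bfun_mem hn0 (i := (p.1:ℤ)) (j := (p.2:ℤ))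
      (by omega) (by omega) (by omega) (by omega)
    have hA := wrap_mem hn0 (Bfun (n:ℤ) (p.1:ℤ) (p.2:ℤ) - (p.1:ℤ) + m)
    obtain ⟨hk1, hk2⟩ := koch_bounds (b := Bfun (n:ℤ) (p.1:ℤ) (p.2:ℤ)) hm hA.1 hA.2
    have e1 : (n:ℤ) * ((n:ℤ) - Bfun (n:ℤ) (p.1:ℤ) (p.2:ℤ)) ≤ (n:ℤ) * ((n:ℤ) - 1) :=
      mul_le_mul_of_nonneg_left (by omega) (by omega)
    have e2 : 0 ≤ (n:ℤ) * ((n:ℤ) - Bfun (n:ℤ) (p.1:ℤ) (p.2:ℤ)) :=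
      mul_nonneg (by omega) (by omega)
    have e3 : (n:ℤ) * ((n:ℤ) - 1) + (n:ℤ) = (n:ℤ)^2 := by ring
    rw [Finset.mem_Icc]
    constructor <;> linarith
  · intro p hp q hq h
    obtain ⟨hp1, hp2⟩ := Finset.mem_product.1 hp
    obtain ⟨hq1, hq2⟩ := Finset.mem_product.1 hq
    rw [Finset.mem_Icc] at hp1 hp2 hq1 hq2
    rw [entry hodd hn3 hm hM hp1.1 hp1.2 hp2.1 hp2.2,
      entry hodd hn3 hm hM hq1.1 hq1.2 hq2.1 hq2.2] at h
    have hBp := Bfun_mem hn0 (i := (p.1:ℤ)) (j := (p.2:ℤ))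
      (by omega) (by omega) (by omega) (by omega)
    have hBq := Bfun_mem hn0 (i := (q.1:ℤ)) (j := (q.2:ℤ))
      (by omega) (by omega) (by omega) (by omega)
    obtain ⟨hA, hB⟩ := koch_inj hm hn0
      (wrap_mem hn0 _) hBp (wrap_mem hn0 _) hBq h
    have hsp := Bfun_spec (i := (p.1:ℤ)) (j := (p.2:ℤ)) hoddZ
    have hsq := Bfun_spec (i := (q.1:ℤ)) (j := (q.2:ℤ)) hoddZ
    -- first coordinates
    have hAmod : Bfun (n:ℤ) (p.1:ℤ) (p.2:ℤ) - (p.1:ℤ) + m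
        ≡ Bfun (n:ℤ) (q.1:ℤ) (q.2:ℤ) - (q.1:ℤ) + m [ZMOD (n:ℤ)] :=
      (wrap_modeq (n:ℤ) _).symm.trans (hA ▸ wrap_modeq (n:ℤ) _)
    have hdA := hAmod.dvd
    have h1 : (p.1:ℤ) ≡ (q.1:ℤ) [ZMOD (n:ℤ)] := by
      obtain ⟨c, hc⟩ := hdA
      rw [hB] at hc
      refine Int.modEq_iff_dvd.2 ⟨-c, ?_⟩
      rw [mul_neg]
      omega
    have hp1q1 : (p.1:ℤ) = (q.1:ℤ) := modeq_eq hn0 h1 (by omega) (by omega)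
    -- second coordinates
    have hdp := hsp.dvd
    have hdq := hsq.dvd
    obtain ⟨c1, hc1⟩ := hdp
    obtain ⟨c2, hc2⟩ := hdq
    have h2 : (p.2:ℤ) ≡ (q.2:ℤ) [ZMOD (n:ℤ)] := by
      refine Int.modEq_iff_dvd.2 ⟨c2 - c1, ?_⟩
      rw [hB] at hc1
      rw [mul_sub]
      omega
    have hp2q2 : (p.2:ℤ) = (q.2:ℤ) := modeq_eq hn0 h2 (by omega) (by omega)
    have : p.1 = q.1 := by exact_mod_cast hp1q1
    have : p.2 = q.2 := by exact_mod_cast hp2q2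
    exact Prod.ext (by assumption) (by assumption)
  · rw [Finset.card_product, Nat.card_Icc, Int.card_Icc]
    have e : ((n:ℤ)^2 + 1 - 1) = ((n * n : ℕ) : ℤ) := by push_cast; ring
    rw [e, Int.toNat_natCast]
    simp

/-- Kochański's construction applied to the transposed indexing `h(i,j) = f(j,i)`
still yields a normal magic square of subtraction of order `n` with residuum
`(n²+1)/2`. -/
theorem kochanski_transposed (n : ℕ) (hn : 3 ≤ n) (hodd : Odd n)
    (m : ℤ) (hm : m = ((n : ℤ) + 1) / 2)
    (M : ℕ → ℕ → ℤ)
    (hM : ∀ i j : ℕ, M i j =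
      if Even ((i : ℤ) + (j : ℤ)) then
        koch (n : ℤ) m (((j : ℤ) - (i : ℤ)) / 2 + m) (((i : ℤ) + (j : ℤ)) / 2)
      else
        koch (n : ℤ) m (wrap (n : ℤ) (((j : ℤ) - (i : ℤ) + (n : ℤ)) / 2 + m))
          (wrap (n : ℤ) (((i : ℤ) + (j : ℤ) + (n : ℤ)) / 2))) :
    IsMagicSubSquare n M (((n : ℤ) ^ 2 + 1) / 2) := by
  have hm' : 2 * m = (n:ℤ) + 1 := by
    obtain ⟨k, hk⟩ := hodd
    subst hk
    push_cast at hm ⊢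
    omega
  have hn0 : 0 < (n:ℤ) := by omega
  have hoddZ : Odd ((n:ℤ)) := by exact_mod_cast hodd
  have hr : ((n : ℤ)^2 + 1) / 2 = (n:ℤ) * (m - 1) + m := by
    have h : (n:ℤ)^2 + 1 = 2 * ((n:ℤ) * (m - 1) + m) := by
      linear_combination (-(n:ℤ) - 1) * hm'
    rw [h, Int.mul_ediv_cancel_left _ two_ne_zero]
  refine ⟨normality hodd hn hm' hM, ?_, ?_, ?_, ?_⟩
  · -- rows
    intro i hi
    rw [Finset.mem_Icc] at hi
    rw [hr]
    refine res_generic hn hodd hm' (rowList n M i)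
      (fun j => Bfun (n:ℤ) (i:ℤ) ((j + 1 : ℕ) : ℤ)) 1 (m - (i:ℤ)) (Or.inl rfl) ?_ ?_ ?_
    · unfold rowList
      refine List.map_congr_left ?_
      intro j hj
      have hj' := List.mem_range.1 hj
      rw [entry hodd hn hm' hM (by omega) (by omega) (by omega) (by omega)]
      have e : Bfun (n:ℤ) (i:ℤ) ((j + 1 : ℕ) : ℤ) - (i:ℤ) + m
          = 1 * Bfun (n:ℤ) (i:ℤ) ((j + 1 : ℕ) : ℤ) + (m - (i:ℤ)) := by ring
      rw [e]
    · intro t ht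
      exact Bfun_mem hn0 (by omega) (by omega) (by omega) (by omega)
    · intro t ht s hs h
      have hst := Bfun_spec (n := (n:ℤ)) (i := (i:ℤ)) (j := ((t + 1 : ℕ) : ℤ)) hoddZ
      have hss : 2 * Bfun (n:ℤ) (i:ℤ) ((t + 1 : ℕ) : ℤ)
          ≡ (i:ℤ) + ((s + 1 : ℕ) : ℤ) [ZMOD (n:ℤ)] := by
        have h' : Bfun (n:ℤ) (i:ℤ) ((t + 1 : ℕ) : ℤ) = Bfun (n:ℤ) (i:ℤ) ((s + 1 : ℕ) : ℤ) := h
        rw [h']; exact Bfun_spec hoddZ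
      have htr := hst.symm.trans hss
      have := modeq_eq hn0 htr (by push_cast; omega) (by push_cast; omega)
      push_cast at this
      omega
  · -- columns
    intro j hj
    rw [Finset.mem_Icc] at hj
    rw [hr]
    refine res_generic hn hodd hm' (colList n M j)
      (fun i => Bfun (n:ℤ) ((i + 1 : ℕ) : ℤ) (j:ℤ)) (-1) ((j:ℤ) + m) (Or.inr rfl) ?_ ?_ ?_
    · unfold colList
      refine List.map_congr_left ?_
      intro i hi
      have hi' := List.mem_range.1 hi
      rw [entry_col hodd hn hm' hM (by omega) (by omega) (by omega) (by omega)]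
      have e : (j:ℤ) - Bfun (n:ℤ) ((i + 1 : ℕ) : ℤ) (j:ℤ) + m
          = (-1) * Bfun (n:ℤ) ((i + 1 : ℕ) : ℤ) (j:ℤ) + ((j:ℤ) + m) := by ring
      rw [e]
    · intro t ht
      exact Bfun_mem hn0 (by omega) (by omega) (by omega) (by omega)
    · intro t ht s hs h
      have hst := Bfun_spec (n := (n:ℤ)) (i := ((t + 1 : ℕ) : ℤ)) (j := (j:ℤ)) hoddZ
      have hss : 2 * Bfun (n:ℤ) ((t + 1 : ℕ) : ℤ) (j:ℤ)
          ≡ ((s + 1 : ℕ) : ℤ) + (j:ℤ) [ZMOD (n:ℤ)] := by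
        have h' : Bfun (n:ℤ) ((t + 1 : ℕ) : ℤ) (j:ℤ) = Bfun (n:ℤ) ((s + 1 : ℕ) : ℤ) (j:ℤ) := h
        rw [h']; exact Bfun_spec hoddZ
      have htr := hst.symm.trans hss
      have := modeq_eq hn0 htr (by push_cast; omega) (by push_cast; omega)
      push_cast at this
      omega
  · rw [hr]; exact res_diag hodd hn hm' hM
  · rw [hr]; exact res_adiag hodd hn hm' hM
end

section
/- For every odd integer n ≥ 3, there exists a normal magic square of subtraction of order n with residuum (n²+1)/2. -/
namespace MagicSubAux

/-! ### Integer mod helpers -/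

lemma dvd_small_eq_zero {n d : ℤ} (hn : 0 < n) (h : n ∣ d) (h1 : -n < d) (h2 : d < n) :
    d = 0 := by
  rcases h with ⟨k, rfl⟩
  rcases lt_trichotomy k 0 with hk | hk | hk
  · nlinarith
  · simp [hk]
  · nlinarith

lemma emod_eq_of {n x y : ℤ} (hn : 0 < n) (h : n ∣ x - y) (h0 : 0 ≤ y) (h1 : y < n) :
    x % n = y := by
  have hxy : x % n = y % n := by
    rw [Int.emod_eq_emod_iff_emod_sub_eq_zero]
    exact Int.emod_eq_zero_of_dvd h
  rw [hxy, Int.emod_eq_of_lt h0 h1]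

lemma emod_pair {n x y : ℤ} (hn : 0 < n) (h : n ∣ x + y + 1) :
    x % n + y % n = n - 1 := by
  have hx0 : 0 ≤ x % n := Int.emod_nonneg _ (by omega)
  have hx1 : x % n < n := Int.emod_lt_of_pos _ hn
  have hy0 : 0 ≤ y % n := Int.emod_nonneg _ (by omega)
  have hy1 : y % n < n := Int.emod_lt_of_pos _ hn
  have hd : n ∣ (x % n + y % n) - (n - 1) := by
    have dx : x % n = x - n * (x / n) := Int.emod_def x n
    have dy : y % n = y - n * (y / n) := Int.emod_def y n
    rcases h with ⟨k, hk⟩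
    refine ⟨k - x / n - y / n - 1, ?_⟩
    rw [dx, dy]
    linear_combination hk
  have := dvd_small_eq_zero hn hd (by omega) (by omega)
  omega

lemma odd_dvd {n m : ℕ} (hm : n = 2 * m + 1) {x : ℤ} (h : (n : ℤ) ∣ 2 * x) :
    (n : ℤ) ∣ x := by
  have hn : (n : ℤ) = 2 * m + 1 := by exact_mod_cast congrArg (Nat.cast : ℕ → ℤ) hm
  rcases h with ⟨k, hk⟩
  refine ⟨(m + 1) * k - x, ?_⟩
  linear_combination ((m : ℤ) + 1) * hk + x * hn

/-- reduce an integer mod `n` to a natural number in `[0, n)`. -/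
def redu (n : ℕ) (x : ℤ) : ℕ := (x % (n : ℤ)).toNat

lemma redu_cast {n : ℕ} (hn : 0 < n) (x : ℤ) : ((redu n x : ℕ) : ℤ) = x % (n : ℤ) :=
  Int.toNat_of_nonneg (Int.emod_nonneg _ (by exact_mod_cast hn.ne'))

lemma redu_lt {n : ℕ} (hn : 0 < n) (x : ℤ) : redu n x < n := by
  have h1 : x % (n : ℤ) < n := Int.emod_lt_of_pos _ (by exact_mod_cast hn)
  have h2 := redu_cast hn x
  omega

lemma redu_dvd {n : ℕ} (hn : 0 < n) (x : ℤ) : (n : ℤ) ∣ x - redu n x := by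
  rw [redu_cast hn]
  exact Int.dvd_self_sub_of_emod_eq rfl

lemma redu_eq {n : ℕ} (hn : 0 < n) {x y : ℤ} (h : (n : ℤ) ∣ x - y) (h0 : 0 ≤ y)
    (h1 : y < n) : ((redu n x : ℕ) : ℤ) = y := by
  rw [redu_cast hn]
  exact emod_eq_of (by exact_mod_cast hn) h h0 h1

/-! ### Alternating sum helpers -/

lemma alt_map_range (f : ℕ → ℤ) (k : ℕ) :
    ((List.range k).map f).alternatingSum = ∑ t ∈ Finset.range k, (-1 : ℤ) ^ t * f t := by
  induction k generalizing f with
  | zero => simp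
  | succ k ih =>
    rw [List.range_succ_eq_map, List.map_cons, List.map_map,
      List.alternatingSum_cons, ih, Finset.sum_range_succ' (fun t => (-1 : ℤ) ^ t * f t) k]
    have h1 : ∀ t ∈ Finset.range k, (-1 : ℤ) ^ (t + 1) * f (t + 1)
        = -((-1 : ℤ) ^ t * (f ∘ Nat.succ) t) := by
      intro t _
      simp only [Function.comp, pow_succ, Nat.succ_eq_add_one]
      ring
    rw [Finset.sum_congr rfl h1, Finset.sum_neg_distrib]
    simp only [pow_zero, one_mul]
    ring

lemma alt_append_single (l : List ℤ) (x : ℤ) :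
    (l ++ [x]).alternatingSum = l.alternatingSum + (-1 : ℤ) ^ l.length * x := by
  induction l with
  | nil => simp
  | cons a l ih =>
    rw [List.cons_append, List.alternatingSum_cons, ih, List.alternatingSum_cons,
      List.length_cons, pow_succ]
    ring

lemma alt_reverse (l : List ℤ) :
    l.reverse.alternatingSum = (-1 : ℤ) ^ (l.length + 1) * l.alternatingSum := by
  induction l with
  | nil => simp
  | cons a l ih =>
    rw [List.reverse_cons, alt_append_single, ih, List.alternatingSum_cons,
      List.length_reverse, List.length_cons, pow_succ, pow_succ]
    ring

lemma alt_map_sub (S : ℤ) (l : List ℤ) :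
    (l.map (fun x => S - x)).alternatingSum
      = (if Even l.length then 0 else S) - l.alternatingSum := by
  induction l with
  | nil => simp
  | cons a l ih =>
    rw [List.map_cons, List.alternatingSum_cons, ih, List.alternatingSum_cons,
      List.length_cons]
    by_cases h : Even l.length
    · rw [if_pos h, if_neg (by simp [Nat.even_add_one, h])]
      ring
    · rw [if_neg h, if_pos (by simp [Nat.even_add_one, h])]
      ring

/-! ### Sum lemmas -/

lemma sum_pows (m : ℕ) : ∑ a ∈ Finset.range (2 * m + 1), (-1 : ℤ) ^ a = 1 := by
  induction m with
  | zero => simp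
  | succ m ih =>
    have h : 2 * (m + 1) + 1 = (2 * m + 1) + 1 + 1 := by ring
    rw [h, Finset.sum_range_succ, Finset.sum_range_succ, ih]
    have h1 : Odd (2 * m + 1) := ⟨m, by ring⟩
    have h2 : Even (2 * m + 1 + 1) := ⟨m + 1, by ring⟩
    rw [h1.neg_one_pow, h2.neg_one_pow]
    ring

lemma sum_pow_mul (m : ℕ) :
    ∑ a ∈ Finset.range (2 * m + 1), (-1 : ℤ) ^ a * (a : ℤ) = m := by
  induction m with
  | zero => simp
  | succ m ih =>
    have h : 2 * (m + 1) + 1 = (2 * m + 1) + 1 + 1 := by ring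
    rw [h, Finset.sum_range_succ, Finset.sum_range_succ, ih]
    have h1 : Odd (2 * m + 1) := ⟨m, by ring⟩
    have h2 : Even (2 * m + 1 + 1) := ⟨m + 1, by ring⟩
    rw [h1.neg_one_pow, h2.neg_one_pow]
    push_cast
    ring

lemma sum_ite_even (m : ℕ) (z : ℤ) :
    ∑ a ∈ Finset.range (2 * m + 1), (if Even a then 0 else z) = m * z := by
  induction m with
  | zero => simp
  | succ m ih =>
    have h : 2 * (m + 1) + 1 = (2 * m + 1) + 1 + 1 := by ring
    rw [h, Finset.sum_range_succ, Finset.sum_range_succ, ih]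
    have h1 : ¬ Even (2 * m + 1) := by simp [Nat.even_add_one, parity_simps]
    have h2 : Even (2 * m + 1 + 1) := ⟨m + 1, by ring⟩
    rw [if_neg h1, if_pos h2]
    push_cast
    ring

lemma sum_range_cast (n m : ℕ) (hm : n = 2 * m + 1) :
    ∑ x ∈ Finset.range n, (x : ℤ) = (n : ℤ) * m := by
  have h2 : (∑ i ∈ Finset.range n, i) * 2 = n * (n - 1) := Finset.sum_range_id_mul_two n
  have h3 : (∑ i ∈ Finset.range n, i) = n * m := by
    have he : n - 1 = 2 * m := by omega
    have : n * (n - 1) = (n * m) * 2 := by rw [he]; ring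
    omega
  calc ∑ x ∈ Finset.range n, (x : ℤ) = ((∑ x ∈ Finset.range n, x : ℕ) : ℤ) := by
        rw [Nat.cast_sum]
    _ = (n : ℤ) * m := by rw [h3]; push_cast; ring

/-! ### Range permutation helper -/

lemma perm_range (n : ℕ) (g g' : ℕ → ℕ) (hg : ∀ x, x < n → g x < n)
    (h1 : ∀ x, x < n → g' (g x) = x) (hg' : ∀ x, x < n → g' x < n)
    (h2 : ∀ x, x < n → g (g' x) = x) :
    ((List.range n).map g).Perm (List.range n) := by
  apply List.perm_of_nodup_nodup_toFinset_eq
  · refine (List.nodup_range (n := n)).map_on ?_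
    intro x hx y hy hxy
    rw [List.mem_range] at hx hy
    rw [← h1 x hx, ← h1 y hy, hxy]
  · exact List.nodup_range (n := n)
  · ext x
    simp only [List.mem_toFinset, List.mem_map, List.mem_range]
    constructor
    · rintro ⟨a, ha, rfl⟩
      exact hg a ha
    · intro hx
      exact ⟨g' x, hg' x hx, h2 x hx⟩


/-! ### The entry function -/

/-- The entry of the square in "block" `a` on a line whose `b`-part is governed by
the affine function `a ↦ c0 + c1 * a` reduced mod `n`. -/
def went (n : ℕ) (c0 c1 : ℤ) (a : ℕ) : ℤ :=
  (n : ℤ) * a + (if Even a then (c0 + c1 * a) % n else (n : ℤ) - 1 - (c0 + c1 * a) % n) + 1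

lemma went_b_bounds (n : ℕ) (hn : 0 < n) (c0 c1 : ℤ) (a : ℕ) :
    0 ≤ (if Even a then (c0 + c1 * a) % n else (n : ℤ) - 1 - (c0 + c1 * a) % n)
      ∧ (if Even a then (c0 + c1 * a) % n else (n : ℤ) - 1 - (c0 + c1 * a) % n) < n := by
  have hn' : (0 : ℤ) < n := by exact_mod_cast hn
  have h0 : 0 ≤ (c0 + c1 * a) % n := Int.emod_nonneg _ (by omega)
  have h1 : (c0 + c1 * a) % n < n := Int.emod_lt_of_pos _ hn'
  by_cases h : Even a <;> simp [h] <;> omega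

lemma went_mono (n : ℕ) (hn : 0 < n) (c0 c1 : ℤ) {s t : ℕ} (h : s ≤ t) :
    went n c0 c1 s ≤ went n c0 c1 t := by
  rcases Nat.eq_or_lt_of_le h with rfl | hlt
  · exact le_rfl
  · have hb1 := went_b_bounds n hn c0 c1 s
    have hb2 := went_b_bounds n hn c0 c1 t
    have hst : (s : ℤ) + 1 ≤ t := by exact_mod_cast hlt
    unfold went
    nlinarith [hb1.1, hb1.2, hb2.1, hb2.2]

lemma went_congr (n : ℕ) (hn : 0 < n) (c0 c1 c0' c1' : ℤ) (a : ℕ)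
    (h : (n : ℤ) ∣ (c0 + c1 * a) - (c0' + c1' * a)) :
    went n c0 c1 a = went n c0' c1' a := by
  have : (c0 + c1 * (a : ℤ)) % n = (c0' + c1' * a) % n := by
    rw [Int.emod_eq_emod_iff_emod_sub_eq_zero]
    exact Int.emod_eq_zero_of_dvd h
  unfold went
  rw [this]

lemma went_compl (n m : ℕ) (hm : n = 2 * m + 1) (c0 c1 c0' c1' : ℤ) (A : ℕ) (hA : A < n)
    (hcong : (n : ℤ) ∣ (c0 + c1 * ((n : ℤ) - 1 - (A : ℤ))) + (c0' + c1' * (A : ℤ)) + 1) :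
    went n c0 c1 (n - 1 - A) = (n : ℤ) ^ 2 + 1 - went n c0' c1' A := by
  have hn : 0 < n := by omega
  have hn' : (0 : ℤ) < n := by exact_mod_cast hn
  have hcast : ((n - 1 - A : ℕ) : ℤ) = (n : ℤ) - 1 - A := by
    have : A ≤ n - 1 := by omega
    push_cast [Nat.cast_sub (by omega : 1 ≤ n), Nat.cast_sub this]
    omega
  have hpar : Even (n - 1 - A) ↔ Even A := by
    rw [Nat.even_sub (by omega : A ≤ n - 1)]
    have : Even (n - 1) := ⟨m, by omega⟩
    tauto
  have hpair : (c0 + c1 * ((n : ℤ) - 1 - A)) % n + (c0' + c1' * A) % n = (n : ℤ) - 1 :=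
    emod_pair hn' hcong
  unfold went
  rw [hcast]
  by_cases h : Even A
  · rw [if_pos (hpar.mpr h), if_pos h]
    nlinarith [hpair]
  · rw [if_neg (fun hc => h (hpar.mp hc)), if_neg h]
    nlinarith [hpair]

/-! ### Sum of reduced affine values over a full period -/

lemma zeta_sum (n m : ℕ) (hm : n = 2 * m + 1) (c0 c1 d : ℤ)
    (hd : (n : ℤ) ∣ c1 * d - 1) :
    ∑ a ∈ Finset.range n, (c0 + c1 * (a : ℤ)) % n = (n : ℤ) * m := by
  have hn : 0 < n := by omega
  have hn' : (0 : ℤ) < n := by exact_mod_cast hn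
  rw [← sum_range_cast n m hm]
  refine Finset.sum_nbij' (fun a => redu n (c0 + c1 * a)) (fun x => redu n (d * ((x : ℤ) - c0)))
    ?_ ?_ ?_ ?_ ?_
  · intro a _
    exact Finset.mem_range.mpr (redu_lt hn _)
  · intro x _
    exact Finset.mem_range.mpr (redu_lt hn _)
  · intro a ha
    rw [Finset.mem_range] at ha
    have goal : ((redu n (d * (((redu n (c0 + c1 * a) : ℕ) : ℤ) - c0)) : ℕ) : ℤ) = (a : ℤ) := by
      refine redu_eq hn ?_ (by positivity) (by exact_mod_cast ha)
      rw [redu_cast hn]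
      obtain ⟨k, hk⟩ := hd
      refine ⟨k * a - d * ((c0 + c1 * a) / n), ?_⟩
      have hq : (c0 + c1 * (a : ℤ)) % n = (c0 + c1 * a) - n * ((c0 + c1 * a) / n) :=
        Int.emod_def _ _
      rw [hq]
      linear_combination (a : ℤ) * hk
    exact_mod_cast goal
  · intro x hx
    rw [Finset.mem_range] at hx
    have goal : ((redu n (c0 + c1 * ((redu n (d * ((x : ℤ) - c0)) : ℕ) : ℤ)) : ℕ) : ℤ) = (x : ℤ) := by
      refine redu_eq hn ?_ (by positivity) (by exact_mod_cast hx)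
      rw [redu_cast hn]
      obtain ⟨k, hk⟩ := hd
      refine ⟨k * (x - c0) - c1 * ((d * ((x : ℤ) - c0)) / n), ?_⟩
      have hq : (d * ((x : ℤ) - c0)) % n = d * ((x : ℤ) - c0) - n * ((d * ((x : ℤ) - c0)) / n) :=
        Int.emod_def _ _
      rw [hq]
      linear_combination ((x : ℤ) - c0) * hk
    exact_mod_cast goal
  · intro a _
    exact (redu_cast hn _).symm

/-! ### Residuum of a line consisting of one entry from each block -/

lemma res_line (n m : ℕ) (hm : n = 2 * m + 1) (c0 c1 d : ℤ)
    (hd : (n : ℤ) ∣ c1 * d - 1) (l : List ℤ)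
    (hl : l.Perm ((List.range n).map (went n c0 c1))) :
    res l = (n : ℤ) * m + m + 1 := by
  have hn : 0 < n := by omega
  set W := went n c0 c1 with hW
  set D := (List.range n).map (fun t => W (n - 1 - t)) with hD
  have hDperm : D.Perm ((List.range n).map W) := by
    have hp := perm_range n (fun t => n - 1 - t) (fun t => n - 1 - t)
      (fun x hx => by show n - 1 - x < n; omega)
      (fun x hx => by show n - 1 - (n - 1 - x) = x; omega)
      (fun x hx => by show n - 1 - x < n; omega)
      (fun x hx => by show n - 1 - (n - 1 - x) = x; omega)
    have e : D = ((List.range n).map (fun t => n - 1 - t)).map W := by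
      rw [List.map_map]; rfl
    rw [e]
    exact hp.map W
  have hlD : l.Perm D := hl.trans hDperm.symm
  have hsort : D.Pairwise (· ≥ ·) := by
    refine List.Pairwise.map _ ?_ (List.pairwise_lt_range (n := n))
    intro a b hab
    exact went_mono n hn c0 c1 (by omega)
  have hres : res l = D.alternatingSum := by
    unfold res
    congr 1
    exact List.Perm.eq_of_pairwise' (List.pairwise_insertionSort _ l) hsort
      ((List.perm_insertionSort _ l).trans hlD)
  rw [hres, hD, alt_map_range]
  have hrefl : ∑ t ∈ Finset.range n, (-1 : ℤ) ^ t * W (n - 1 - t)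
      = ∑ a ∈ Finset.range n, (-1 : ℤ) ^ a * W a := by
    have e1 : ∑ t ∈ Finset.range n, (-1 : ℤ) ^ t * W (n - 1 - t)
        = ∑ t ∈ Finset.range n, (-1 : ℤ) ^ (n - 1 - (n - 1 - t)) * W (n - 1 - t) := by
      refine Finset.sum_congr rfl fun t ht => ?_
      rw [Finset.mem_range] at ht
      congr 2
      omega
    rw [e1, Finset.sum_range_reflect (fun j => (-1 : ℤ) ^ (n - 1 - j) * W j) n]
    refine Finset.sum_congr rfl fun j hj => ?_
    rw [Finset.mem_range] at hj
    congr 1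
    have hj' : j ≤ n - 1 := by omega
    rcases Nat.even_or_odd j with h | h
    · have : Even (n - 1 - j) := by
        rw [Nat.even_sub hj']
        have : Even (n - 1) := ⟨m, by omega⟩
        tauto
      rw [this.neg_one_pow, h.neg_one_pow]
    · have : ¬ Even (n - 1 - j) := by
        rw [Nat.even_sub hj']
        have he : Even (n - 1) := ⟨m, by omega⟩
        simp [he, Nat.not_even_iff_odd.mpr h]
      rw [(Nat.not_even_iff_odd.mp this).neg_one_pow, h.neg_one_pow]
  rw [hrefl]
  have hsplit : ∀ a ∈ Finset.range n, (-1 : ℤ) ^ a * W a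
      = (n : ℤ) * ((-1) ^ a * a) + ((c0 + c1 * a) % n - (if Even a then 0 else (n : ℤ) - 1))
        + (-1) ^ a := by
    intro a _
    by_cases h : Even a
    · rw [hW]
      unfold went
      rw [if_pos h, if_pos h, h.neg_one_pow]
      ring
    · rw [hW]
      unfold went
      rw [if_neg h, if_neg h, (Nat.not_even_iff_odd.mp h).neg_one_pow]
      ring
  rw [Finset.sum_congr rfl hsplit]
  rw [Finset.sum_add_distrib, Finset.sum_add_distrib, Finset.sum_sub_distrib,
    ← Finset.mul_sum]
  have e2 : ∑ a ∈ Finset.range n, (-1 : ℤ) ^ a * a = m := by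
    rw [hm]; exact sum_pow_mul m
  have e3 : ∑ a ∈ Finset.range n, (c0 + c1 * (a : ℤ)) % n = (n : ℤ) * m :=
    zeta_sum n m hm c0 c1 d hd
  have e4 : ∑ a ∈ Finset.range n, (if Even a then (0 : ℤ) else (n : ℤ) - 1)
      = m * ((n : ℤ) - 1) := by
    rw [hm]; exact sum_ite_even m _
  have e5 : ∑ a ∈ Finset.range n, (-1 : ℤ) ^ a = 1 := by
    rw [hm]; exact sum_pows m
  rw [e2, e3, e4, e5]
  ring

/-! ### Residuum of a self-complementary line -/

lemma res_selfcompl (S c : ℤ) (l : List ℤ) (hodd : Odd l.length)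
    (h : (l.map (fun x => S - x)).Perm l) (hc : 2 * c = S) : res l = c := by
  set D := l.insertionSort (· ≥ ·) with hD
  have hperm : D.Perm l := List.perm_insertionSort _ l
  have hsortD : D.Pairwise (· ≥ ·) := List.pairwise_insertionSort _ l
  set D₂ := (D.map (fun x => S - x)).reverse with hD2
  have hpermD2 : D₂.Perm D :=
    ((D.map fun x => S - x).reverse_perm).trans (((hperm.map _).trans h).trans hperm.symm)
  have hsortD2 : D₂.Pairwise (· ≥ ·) := by
    rw [hD2, List.pairwise_reverse, List.pairwise_map]
    refine hsortD.imp fun {a b} hab => ?_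
    show S - b ≥ S - a
    omega
  have hEq : D₂ = D := List.Perm.eq_of_pairwise' hsortD2 hsortD hpermD2
  have hlenD : D.length = l.length := List.length_insertionSort _ l
  have halt : D.alternatingSum = S - D.alternatingSum := by
    conv_lhs => rw [← hEq, hD2, alt_reverse, alt_map_sub]
    rw [List.length_map, hlenD]
    have h1 : ¬ Even l.length := Nat.not_even_iff_odd.mpr hodd
    have h2 : Even (l.length + 1) := by simp [Nat.even_add_one, h1]
    rw [if_neg h1, h2.neg_one_pow]
    ring
  have : res l = D.alternatingSum := rfl
  rw [this]
  omega


/-! ### The magic square construction -/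

/-- The magic square of subtraction (1-based indices). -/
def Msq (n : ℕ) (i j : ℕ) : ℤ :=
  went n ((i : ℤ) - 2) (-2) (redu n ((i : ℤ) + 2 * (j : ℤ) - 2))

lemma divmod_unique {n : ℕ} {A₁ A₂ : ℕ} {B₁ B₂ : ℤ} (hA₁ : A₁ < n) (hA₂ : A₂ < n)
    (hB₁ : 0 ≤ B₁ ∧ B₁ < n) (hB₂ : 0 ≤ B₂ ∧ B₂ < n)
    (h : (n : ℤ) * A₁ + B₁ = (n : ℤ) * A₂ + B₂) : A₁ = A₂ ∧ B₁ = B₂ := by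
  have hn : 0 < n := by omega
  have hn' : (0 : ℤ) < n := by exact_mod_cast hn
  have hd : (n : ℤ) ∣ B₁ - B₂ := ⟨(A₂ : ℤ) - A₁, by linear_combination h⟩
  have hB : B₁ - B₂ = 0 := dvd_small_eq_zero hn' hd (by omega) (by omega)
  have hA : (A₁ : ℤ) = A₂ := by
    have : (n : ℤ) * A₁ = (n : ℤ) * A₂ := by omega
    exact mul_left_cancel₀ (by omega) this
  exact ⟨by exact_mod_cast hA, by omega⟩

lemma Msq_bounds (n : ℕ) (hn : 0 < n) (i j : ℕ) :
    1 ≤ Msq n i j ∧ Msq n i j ≤ (n : ℤ) ^ 2 := by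
  have hA : redu n ((i : ℤ) + 2 * (j : ℤ) - 2) < n := redu_lt hn _
  have hb := went_b_bounds n hn ((i : ℤ) - 2) (-2) (redu n ((i : ℤ) + 2 * (j : ℤ) - 2))
  unfold Msq went
  constructor
  · have : (0:ℤ) ≤ (n : ℤ) * (redu n ((i : ℤ) + 2 * (j : ℤ) - 2)) := by positivity
    omega
  · have hA' : ((redu n ((i : ℤ) + 2 * (j : ℤ) - 2) : ℕ) : ℤ) ≤ (n : ℤ) - 1 := by
      have : ((redu n ((i : ℤ) + 2 * (j : ℤ) - 2) : ℕ) : ℤ) < (n : ℤ) := by exact_mod_cast hA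
      omega
    nlinarith [hb.1, hb.2]

section Main

variable {n m : ℕ} (hm : n = 2 * m + 1) (hm1 : 1 ≤ m)

include hm hm1

lemma hn_pos : 0 < n := by omega

lemma hnz : (n : ℤ) = 2 * (m : ℤ) + 1 := by
  have := congrArg (Nat.cast : ℕ → ℤ) hm
  push_cast at this
  linarith

lemma target_eq : ((n : ℤ) ^ 2 + 1) / 2 = (n : ℤ) * m + m + 1 := by
  have h := hnz hm hm1
  have h2 : (n : ℤ) ^ 2 + 1 = 2 * ((n : ℤ) * m + m + 1) := by
    rw [h]; ring
  rw [h2, Int.mul_ediv_cancel_left _ two_ne_zero]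

/-! #### Rows -/

lemma row_res (i : ℕ) (hi : 1 ≤ i ∧ i ≤ n) :
    res (rowList n (Msq n) i) = ((n : ℤ) ^ 2 + 1) / 2 := by
  have hn : 0 < n := hn_pos hm hm1
  have hnz' : (n : ℤ) = 2 * (m : ℤ) + 1 := hnz hm hm1
  rw [target_eq hm hm1]
  set g : ℕ → ℕ := fun j => redu n ((i : ℤ) + 2 * (j : ℤ)) with hg
  set g' : ℕ → ℕ := fun x => redu n (((m : ℤ) + 1) * ((x : ℤ) - (i : ℤ))) with hg'
  have hperm : (rowList n (Msq n) i).Perm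
      ((List.range n).map (went n ((i : ℤ) - 2) (-2))) := by
    have e1 : rowList n (Msq n) i
        = ((List.range n).map g).map (went n ((i : ℤ) - 2) (-2)) := by
      rw [List.map_map]
      unfold rowList Msq
      refine List.map_congr_left fun j _ => ?_
      have : (i : ℤ) + 2 * ((j + 1 : ℕ) : ℤ) - 2 = (i : ℤ) + 2 * (j : ℤ) := by
        push_cast; ring
      simp only [Function.comp, hg, this]
    rw [e1]
    refine List.Perm.map _ (perm_range n g g' ?_ ?_ ?_ ?_)
    · intro x _; exact redu_lt hn _
    · intro x hx
      have hx' : ((g' (g x) : ℕ) : ℤ) = (x : ℤ) := by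
        refine redu_eq hn ?_ (by positivity) (by exact_mod_cast hx)
        simp only [hg, hg']
        rw [redu_cast hn, Int.emod_def]
        refine ⟨(x : ℤ) - ((m : ℤ) + 1) * (((i : ℤ) + 2 * x) / n), ?_⟩
        linear_combination (-(x : ℤ)) * hnz'
      exact_mod_cast hx'
    · intro x _; exact redu_lt hn _
    · intro x hx
      have hx' : ((g (g' x) : ℕ) : ℤ) = (x : ℤ) := by
        refine redu_eq hn ?_ (by positivity) (by exact_mod_cast hx)
        simp only [hg, hg']
        rw [redu_cast hn, Int.emod_def]
        refine ⟨((x : ℤ) - (i : ℤ)) - 2 * ((((m : ℤ) + 1) * ((x : ℤ) - i)) / n), ?_⟩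
        linear_combination (-((x : ℤ) - (i : ℤ))) * hnz'
      exact_mod_cast hx'
  refine res_line n m hm ((i : ℤ) - 2) (-2) (-((m : ℤ) + 1)) ?_ _ hperm
  exact ⟨1, by omega⟩

/-! #### Columns -/

lemma col_res (j : ℕ) (hj : 1 ≤ j ∧ j ≤ n) :
    res (colList n (Msq n) j) = ((n : ℤ) ^ 2 + 1) / 2 := by
  have hn : 0 < n := hn_pos hm hm1
  have hnz' : (n : ℤ) = 2 * (m : ℤ) + 1 := hnz hm hm1
  rw [target_eq hm hm1]
  set g : ℕ → ℕ := fun x => redu n ((x : ℤ) + 2 * (j : ℤ) - 1) with hg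
  set g' : ℕ → ℕ := fun x => redu n ((x : ℤ) - 2 * (j : ℤ) + 1) with hg'
  have hperm : (colList n (Msq n) j).Perm
      ((List.range n).map (went n (-2 * (j : ℤ)) (-1))) := by
    have e1 : colList n (Msq n) j
        = ((List.range n).map g).map (went n (-2 * (j : ℤ)) (-1)) := by
      rw [List.map_map]
      unfold colList Msq
      refine List.map_congr_left fun x _ => ?_
      simp only [Function.comp, hg]
      have e2 : ((x + 1 : ℕ) : ℤ) + 2 * (j : ℤ) - 2 = (x : ℤ) + 2 * (j : ℤ) - 1 := by
        push_cast; ring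
      rw [e2]
      refine went_congr n hn _ _ _ _ _ ?_
      have hdv := redu_dvd hn ((x : ℤ) + 2 * (j : ℤ) - 1)
      have e3 : (((x + 1 : ℕ) : ℤ) - 2) + (-2) * ((redu n ((x : ℤ) + 2 * (j : ℤ) - 1) : ℕ) : ℤ)
          - ((-2 * (j : ℤ)) + (-1) * ((redu n ((x : ℤ) + 2 * (j : ℤ) - 1) : ℕ) : ℤ))
          = ((x : ℤ) + 2 * (j : ℤ) - 1) - ((redu n ((x : ℤ) + 2 * (j : ℤ) - 1) : ℕ) : ℤ) := by
        push_cast; ring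
      rw [e3]
      exact hdv
    rw [e1]
    refine List.Perm.map _ (perm_range n g g' ?_ ?_ ?_ ?_)
    · intro x _; exact redu_lt hn _
    · intro x hx
      have hx' : ((g' (g x) : ℕ) : ℤ) = (x : ℤ) := by
        refine redu_eq hn ?_ (by positivity) (by exact_mod_cast hx)
        simp only [hg, hg']
        rw [redu_cast hn, Int.emod_def]
        exact ⟨-(((x : ℤ) + 2 * j - 1) / n), by ring⟩
      exact_mod_cast hx'
    · intro x _; exact redu_lt hn _
    · intro x hx
      have hx' : ((g (g' x) : ℕ) : ℤ) = (x : ℤ) := by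
        refine redu_eq hn ?_ (by positivity) (by exact_mod_cast hx)
        simp only [hg, hg']
        rw [redu_cast hn, Int.emod_def]
        exact ⟨-(((x : ℤ) - 2 * j + 1) / n), by ring⟩
      exact_mod_cast hx'
  refine res_line n m hm (-2 * (j : ℤ)) (-1) (-1) ?_ _ hperm
  exact ⟨0, by ring⟩

end Main


section Main2

variable {n m : ℕ} (hm : n = 2 * m + 1) (hm1 : 1 ≤ m)

include hm hm1

/-! #### Diagonal -/

lemma diag_res : res (diagList n (Msq n)) = ((n : ℤ) ^ 2 + 1) / 2 := by
  have hn : 0 < n := by omega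
  have hnz' : (n : ℤ) = 2 * (m : ℤ) + 1 := hnz hm hm1
  set V : ℕ → ℤ := fun x => Msq n (x + 1) (x + 1) with hV
  have hdl : diagList n (Msq n) = (List.range n).map V := rfl
  -- complement identity
  have hcompl : ∀ x, x < n → (n : ℤ) ^ 2 + 1 - V x = V (n - 1 - x) := by
    intro x hx
    have hVx : V x = went n ((x : ℤ) - 1) (-2) (redu n (3 * (x : ℤ) + 1)) := by
      simp only [hV]
      unfold Msq
      have e1 : ((x + 1 : ℕ) : ℤ) - 2 = (x : ℤ) - 1 := by push_cast; ring
      have e2 : ((x + 1 : ℕ) : ℤ) + 2 * ((x + 1 : ℕ) : ℤ) - 2 = 3 * (x : ℤ) + 1 := by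
        push_cast; ring
      rw [e1, e2]
    set A : ℕ := redu n (3 * (x : ℤ) + 1) with hA
    have hAlt : A < n := redu_lt hn _
    have hVnx : V (n - 1 - x) = went n ((n : ℤ) - (x : ℤ) - 2) (-2) (n - 1 - A) := by
      simp only [hV]
      unfold Msq
      have hc1 : ((n - 1 - x + 1 : ℕ) : ℤ) = (n : ℤ) - x := by
        have : x ≤ n - 1 := by omega
        push_cast [Nat.cast_sub this, Nat.cast_sub (by omega : 1 ≤ n)]
        ring
      rw [hc1]
      have e1 : (n : ℤ) - x - 2 = (n : ℤ) - (x : ℤ) - 2 := rfl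
      congr 1
      have hred : ((redu n ((n : ℤ) - x + 2 * ((n : ℤ) - x) - 2) : ℕ) : ℤ)
          = (n : ℤ) - 1 - A := by
        refine redu_eq hn ?_ (by omega) (by omega)
        have hd1 := redu_dvd hn (3 * (x : ℤ) + 1)
        have e2 : ((n : ℤ) - x + 2 * ((n : ℤ) - x) - 2) - ((n : ℤ) - 1 - A)
            = 2 * (n : ℤ) - ((3 * (x : ℤ) + 1) - A) := by push_cast [hA]; ring
        rw [e2]
        exact dvd_sub ⟨2, by ring⟩ hd1
      have hle : A ≤ n - 1 := by omega
      have : ((n - 1 - A : ℕ) : ℤ) = (n : ℤ) - 1 - A := by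
        push_cast [Nat.cast_sub hle, Nat.cast_sub (by omega : 1 ≤ n)]
        ring
      exact_mod_cast hred.trans this.symm
    have hwc : went n ((n : ℤ) - (x : ℤ) - 2) (-2) (n - 1 - A)
        = (n : ℤ) ^ 2 + 1 - went n ((x : ℤ) - 1) (-2) A := by
      refine went_compl n m hm _ _ _ _ A hAlt ?_
      refine ⟨-1, by push_cast; try ring⟩
    rw [hVx, hVnx, hwc]
    try ring
  -- self-complementarity permutation
  have hmapc : ((diagList n (Msq n)).map (fun v => ((n : ℤ) ^ 2 + 1) - v)).Perm
      (diagList n (Msq n)) := by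
    rw [hdl, List.map_map]
    have e1 : (List.range n).map ((fun v => ((n : ℤ) ^ 2 + 1) - v) ∘ V)
        = ((List.range n).map (fun t => n - 1 - t)).map V := by
      rw [List.map_map]
      refine List.map_congr_left fun x hx => ?_
      rw [List.mem_range] at hx
      exact hcompl x hx
    rw [e1]
    exact List.Perm.map V (perm_range n (fun t => n - 1 - t) (fun t => n - 1 - t)
      (fun x hx => by show n - 1 - x < n; omega)
      (fun x hx => by show n - 1 - (n - 1 - x) = x; omega)
      (fun x hx => by show n - 1 - x < n; omega)
      (fun x hx => by show n - 1 - (n - 1 - x) = x; omega))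
  refine res_selfcompl ((n : ℤ) ^ 2 + 1) _ _ ?_ hmapc ?_
  · rw [hdl, List.length_map, List.length_range]
    exact ⟨m, by omega⟩
  · rw [target_eq hm hm1, hnz']
    ring

/-! #### Antidiagonal -/

lemma adiag_res : res (adiagList n (Msq n)) = ((n : ℤ) ^ 2 + 1) / 2 := by
  have hn : 0 < n := by omega
  have hnz' : (n : ℤ) = 2 * (m : ℤ) + 1 := hnz hm hm1
  set V : ℕ → ℤ := fun x => Msq n (x + 1) (n - x) with hV
  have hdl : adiagList n (Msq n) = (List.range n).map V := rfl
  have hVclean : ∀ x, x < n → V x = went n ((x : ℤ) - 1) (-2) (n - 1 - x) := by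
    intro x hx
    simp only [hV]
    unfold Msq
    have e1 : ((x + 1 : ℕ) : ℤ) - 2 = (x : ℤ) - 1 := by push_cast; ring
    rw [e1]
    congr 1
    have e2 : ((x + 1 : ℕ) : ℤ) + 2 * ((n - x : ℕ) : ℤ) - 2 = 2 * (n : ℤ) - x - 1 := by
      push_cast [Nat.cast_sub (by omega : x ≤ n)]
      ring
    rw [e2]
    have hred : ((redu n (2 * (n : ℤ) - x - 1) : ℕ) : ℤ) = (n : ℤ) - 1 - x := by
      refine redu_eq hn ?_ (by omega) (by omega)
      exact ⟨1, by ring⟩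
    have hcast : ((n - 1 - x : ℕ) : ℤ) = (n : ℤ) - 1 - x := by
      push_cast [Nat.cast_sub (by omega : x ≤ n - 1), Nat.cast_sub (by omega : 1 ≤ n)]
      ring
    exact_mod_cast hred.trans hcast.symm
  have hcompl : ∀ x, x < n → (n : ℤ) ^ 2 + 1 - V x = V (n - 1 - x) := by
    intro x hx
    rw [hVclean x hx, hVclean (n - 1 - x) (by omega)]
    have hc1 : ((n - 1 - x : ℕ) : ℤ) = (n : ℤ) - 1 - x := by
      push_cast [Nat.cast_sub (by omega : x ≤ n - 1), Nat.cast_sub (by omega : 1 ≤ n)]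
      ring
    have hc2 : n - 1 - (n - 1 - x) = x := by omega
    rw [hc2, hc1]
    have hwc : went n ((x : ℤ) - 1) (-2) (n - 1 - x)
        = (n : ℤ) ^ 2 + 1 - went n ((n : ℤ) - 1 - (x : ℤ) - 1) (-2) x := by
      refine went_compl n m hm _ _ _ _ x (by exact_mod_cast hx) ?_
      refine ⟨-1, by push_cast; try ring⟩
    rw [hwc]
    try ring
  have hmapc : ((adiagList n (Msq n)).map (fun v => ((n : ℤ) ^ 2 + 1) - v)).Perm
      (adiagList n (Msq n)) := by
    rw [hdl, List.map_map]
    have e1 : (List.range n).map ((fun v => ((n : ℤ) ^ 2 + 1) - v) ∘ V)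
        = ((List.range n).map (fun t => n - 1 - t)).map V := by
      rw [List.map_map]
      refine List.map_congr_left fun x hx => ?_
      rw [List.mem_range] at hx
      exact hcompl x hx
    rw [e1]
    exact List.Perm.map V (perm_range n (fun t => n - 1 - t) (fun t => n - 1 - t)
      (fun x hx => by show n - 1 - x < n; omega)
      (fun x hx => by show n - 1 - (n - 1 - x) = x; omega)
      (fun x hx => by show n - 1 - x < n; omega)
      (fun x hx => by show n - 1 - (n - 1 - x) = x; omega))
  refine res_selfcompl ((n : ℤ) ^ 2 + 1) _ _ ?_ hmapc ?_
  · rw [hdl, List.length_map, List.length_range]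
    exact ⟨m, by omega⟩
  · rw [target_eq hm hm1, hnz']
    ring

/-! #### Entries -/

lemma entries_injOn :
    Set.InjOn (fun p : ℕ × ℕ => Msq n p.1 p.2)
      ↑(Finset.Icc 1 n ×ˢ Finset.Icc 1 n) := by
  have hn : 0 < n := by omega
  have hn' : (0 : ℤ) < n := by exact_mod_cast hn
  rintro ⟨i₁, j₁⟩ hp ⟨i₂, j₂⟩ hq heq
  simp only [Finset.coe_product, Set.mem_prod, Finset.mem_coe, Finset.mem_Icc] at hp hq
  simp only at heq
  unfold Msq went at heq
  set A₁ : ℕ := redu n ((i₁ : ℤ) + 2 * (j₁ : ℤ) - 2) with hA1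
  set A₂ : ℕ := redu n ((i₂ : ℤ) + 2 * (j₂ : ℤ) - 2) with hA2
  have hb1 := went_b_bounds n hn ((i₁ : ℤ) - 2) (-2) A₁
  have hb2 := went_b_bounds n hn ((i₂ : ℤ) - 2) (-2) A₂
  have hdu := divmod_unique (redu_lt hn _) (redu_lt hn _) hb1 hb2
    (by linarith [heq] : (n : ℤ) * A₁
      + (if Even A₁ then ((i₁ : ℤ) - 2 + -2 * A₁) % n else (n : ℤ) - 1 - ((i₁ : ℤ) - 2 + -2 * A₁) % n)
      = (n : ℤ) * A₂
      + (if Even A₂ then ((i₂ : ℤ) - 2 + -2 * A₂) % n else (n : ℤ) - 1 - ((i₂ : ℤ) - 2 + -2 * A₂) % n))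
  obtain ⟨hAeq, hBeq⟩ := hdu
  rw [← hA1, ← hA2] at hAeq
  rw [hAeq] at hBeq
  -- from B equality get i₁ = i₂
  have hzeta : ((i₁ : ℤ) - 2 + -2 * A₂) % n = ((i₂ : ℤ) - 2 + -2 * A₂) % n := by
    by_cases h : Even A₂
    · rwa [if_pos h, if_pos h] at hBeq
    · rw [if_neg h, if_neg h] at hBeq
      omega
  have hii : i₁ = i₂ := by
    have hd : (n : ℤ) ∣ ((i₁ : ℤ) - 2 + -2 * A₂) - ((i₂ : ℤ) - 2 + -2 * A₂) := by
      rw [Int.emod_eq_emod_iff_emod_sub_eq_zero] at hzeta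
      exact Int.dvd_of_emod_eq_zero hzeta
    have hd2 : (n : ℤ) ∣ (i₁ : ℤ) - (i₂ : ℤ) := by
      have e : ((i₁ : ℤ) - 2 + -2 * A₂) - ((i₂ : ℤ) - 2 + -2 * A₂)
          = (i₁ : ℤ) - i₂ := by ring
      rwa [e] at hd
    have : (i₁ : ℤ) - (i₂ : ℤ) = 0 := by
      refine dvd_small_eq_zero hn' hd2 ?_ ?_
      · have : (i₁ : ℤ) ≥ 1 := by exact_mod_cast hp.1.1
        have : (i₂ : ℤ) ≤ n := by exact_mod_cast hq.1.2
        omega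
      · have : (i₂ : ℤ) ≥ 1 := by exact_mod_cast hq.1.1
        have : (i₁ : ℤ) ≤ n := by exact_mod_cast hp.1.2
        omega
    omega
  -- from A equality get j₁ = j₂
  have hjj : j₁ = j₂ := by
    have hd1 := redu_dvd hn ((i₁ : ℤ) + 2 * (j₁ : ℤ) - 2)
    have hd2 := redu_dvd hn ((i₂ : ℤ) + 2 * (j₂ : ℤ) - 2)
    rw [← hA1] at hd1
    rw [← hA2] at hd2
    have hAc : (A₁ : ℤ) = (A₂ : ℤ) := by exact_mod_cast hAeq
    have hd : (n : ℤ) ∣ 2 * ((j₁ : ℤ) - (j₂ : ℤ)) := by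
      have := dvd_sub hd1 hd2
      have e : ((i₁ : ℤ) + 2 * (j₁ : ℤ) - 2 - A₁) - ((i₂ : ℤ) + 2 * (j₂ : ℤ) - 2 - A₂)
          = 2 * ((j₁ : ℤ) - (j₂ : ℤ)) := by
        rw [hAc, hii]
        push_cast
        ring
      rwa [e] at this
    have hd' : (n : ℤ) ∣ (j₁ : ℤ) - (j₂ : ℤ) := odd_dvd hm hd
    have : (j₁ : ℤ) - (j₂ : ℤ) = 0 := by
      refine dvd_small_eq_zero hn' hd' ?_ ?_
      · have : (j₁ : ℤ) ≥ 1 := by exact_mod_cast hp.2.1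
        have : (j₂ : ℤ) ≤ n := by exact_mod_cast hq.2.2
        omega
      · have : (j₂ : ℤ) ≥ 1 := by exact_mod_cast hq.2.1
        have : (j₁ : ℤ) ≤ n := by exact_mod_cast hp.2.2
        omega
    omega
  exact Prod.ext hii hjj

lemma entries_eq :
    ((Finset.Icc 1 n ×ˢ Finset.Icc 1 n).val.map fun p : ℕ × ℕ => Msq n p.1 p.2)
      = (Finset.Icc (1 : ℤ) ((n : ℤ) ^ 2)).val := by
  have hn : 0 < n := by omega
  have hinj := entries_injOn hm hm1
  have himg : (Finset.Icc 1 n ×ˢ Finset.Icc 1 n).image (fun p : ℕ × ℕ => Msq n p.1 p.2)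
      = Finset.Icc (1 : ℤ) ((n : ℤ) ^ 2) := by
    refine Finset.eq_of_subset_of_card_le ?_ ?_
    · intro v hv
      rw [Finset.mem_image] at hv
      obtain ⟨p, _, rfl⟩ := hv
      rw [Finset.mem_Icc]
      exact Msq_bounds n hn p.1 p.2
    · rw [Finset.card_image_of_injOn hinj, Int.card_Icc, Finset.card_product,
        Nat.card_Icc]
      have e : ((n : ℤ) ^ 2 + 1 - 1) = ((n ^ 2 : ℕ) : ℤ) := by push_cast; ring
      rw [e, Int.toNat_natCast]
      have h1 : n + 1 - 1 = n := by omega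
      rw [h1, sq]
  calc ((Finset.Icc 1 n ×ˢ Finset.Icc 1 n).val.map fun p : ℕ × ℕ => Msq n p.1 p.2)
      = ((Finset.Icc 1 n ×ˢ Finset.Icc 1 n).image (fun p : ℕ × ℕ => Msq n p.1 p.2)).val :=
        (Finset.image_val_of_injOn hinj).symm
    _ = (Finset.Icc (1 : ℤ) ((n : ℤ) ^ 2)).val := by rw [himg]

end Main2

end MagicSubAux

/-- For every odd `n ≥ 3` there exists a normal magic square of subtraction of
order `n` with residuum `(n²+1)/2`. -/
theorem exists_odd_square (n : ℕ) (hn : 3 ≤ n) (hodd : Odd n) :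
    ∃ M : ℕ → ℕ → ℤ, IsMagicSubSquare n M (((n : ℤ) ^ 2 + 1) / 2) := by
  obtain ⟨m, hm⟩ := hodd
  have hm' : n = 2 * m + 1 := by omega
  have hm1 : 1 ≤ m := by omega
  refine ⟨MagicSubAux.Msq n, ?_, ?_, ?_, ?_, ?_⟩
  · exact MagicSubAux.entries_eq hm' hm1
  · intro i hi
    rw [Finset.mem_Icc] at hi
    exact MagicSubAux.row_res hm' hm1 i hi
  · intro j hj
    rw [Finset.mem_Icc] at hj
    exact MagicSubAux.col_res hm' hm1 j hj
  · exact MagicSubAux.diag_res hm' hm1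
  · exact MagicSubAux.adiag_res hm' hm1
end

section
/- For every integer k ≥ 1, there exists a normal magic square of subtraction of order 4k with residuum 8k. -/
namespace MagicSubAux

/-- The basic `4 × 4` tile. -/
def T : ℕ → ℕ → ℤ
  | 0, 0 => 1  | 0, 1 => 2  | 0, 2 => 3  | 0, 3 => 10
  | 1, 0 => 12 | 1, 1 => 11 | 1, 2 => 6  | 1, 3 => 15
  | 2, 0 => 13 | 2, 1 => 16 | 2, 2 => 9  | 2, 3 => 4
  | 3, 0 => 8  | 3, 1 => 5  | 3, 2 => 14 | 3, 3 => 7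
  | _, _ => 0

lemma T_bd : ∀ r < 4, ∀ s < 4, 1 ≤ T r s ∧ T r s ≤ 16 := by decide

lemma T_inj : ∀ r ∈ Finset.range 4, ∀ s ∈ Finset.range 4, ∀ r' ∈ Finset.range 4,
    ∀ s' ∈ Finset.range 4, T r s = T r' s' → r = r' ∧ s = s' := by decide

/-- `chunks W m = W (m-1) ++ ⋯ ++ W 0`. -/
def chunks (W : ℕ → List ℤ) : ℕ → List ℤ
  | 0 => []
  | m + 1 => W m ++ chunks W m

lemma mem_chunks {W : ℕ → List ℤ} {m : ℕ} {y : ℤ} (h : y ∈ chunks W m) :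
    ∃ s < m, y ∈ W s := by
  induction m with
  | zero => simp [chunks] at h
  | succ m ih =>
    rw [chunks, List.mem_append] at h
    rcases h with h | h
    · exact ⟨m, Nat.lt_succ_self m, h⟩
    · obtain ⟨s, hs, hy⟩ := ih h
      exact ⟨s, Nat.lt_succ_of_lt hs, hy⟩

lemma res_eq_of_perm_sorted {l m : List ℤ} (h : l.Perm m) (hm : m.Pairwise (· ≥ ·)) :
    res l = m.alternatingSum := by
  unfold res
  rw [List.Perm.eq_of_pairwise (fun a b _ _ h1 h2 => le_antisymm h2 h1)
    (List.pairwise_insertionSort _ l) hm ((List.perm_insertionSort _ l).trans h)]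

lemma res_line_s18 (k : ℕ) (b : ℕ → ℕ) (hb : ∀ t, t + 1 < k → b t < b (t + 1))
    (u : ℕ → ℤ) (w : List ℤ)
    (hperm : List.Perm [u 0, u 1, u 2, u 3] w)
    (hsort : w.Pairwise (· ≥ ·))
    (hbd : ∀ x ∈ w, 1 ≤ x ∧ x ≤ 16)
    (halt : w.alternatingSum = 8) :
    res ((List.range (4 * k)).map fun j => 16 * (b (j / 4) : ℤ) + u (j % 4)) = 8 * k := by
  set W : ℕ → List ℤ := fun t => w.map fun x => 16 * (b t : ℤ) + x with hW
  have hmono : ∀ t, t < k → ∀ s, s < t → b s < b t := by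
    intro t ht
    induction t with
    | zero => omega
    | succ t ih =>
      intro s hs
      have h1 : b t < b (t + 1) := hb t ht
      rcases Nat.lt_succ_iff_lt_or_eq.mp hs with h | h
      · exact (ih (by omega) s h).trans h1
      · subst h; exact h1
  have hWmem : ∀ t, ∀ x ∈ W t, 16 * (b t : ℤ) + 1 ≤ x ∧ x ≤ 16 * (b t : ℤ) + 16 := by
    intro t x hx
    rw [hW] at hx
    obtain ⟨y, hy, rfl⟩ := List.mem_map.mp hx
    have := hbd y hy
    omega
  have hmap : ∀ m : ℕ,
      List.Perm ((List.range (4 * m)).map fun j => 16 * (b (j / 4) : ℤ) + u (j % 4))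
        (chunks W m) := by
    intro m
    induction m with
    | zero => simp [chunks]
    | succ m ih =>
      have hr : List.range (4 * (m + 1))
          = List.range (4 * m) ++ [4 * m + 0, 4 * m + 1, 4 * m + 2, 4 * m + 3] := by
        have h1 : 4 * (m + 1) = 4 * m + 4 := by ring
        rw [h1, List.range_add]
        rfl
      rw [hr, List.map_append]
      have hc : ∀ s : ℕ, s < 4 →
          (16 * (b ((4 * m + s) / 4) : ℤ) + u ((4 * m + s) % 4)) = 16 * (b m : ℤ) + u s := by
        intro s hs
        have h1 : (4 * m + s) / 4 = m := by omega
        have h2 : (4 * m + s) % 4 = s := by omega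
        rw [h1, h2]
      have hlist : List.map (fun j => 16 * (b (j / 4) : ℤ) + u (j % 4))
          [4 * m + 0, 4 * m + 1, 4 * m + 2, 4 * m + 3]
          = List.map (fun x => 16 * (b m : ℤ) + x) [u 0, u 1, u 2, u 3] := by
        simp only [List.map_cons, List.map_nil]
        rw [hc 0 (by omega), hc 1 (by omega), hc 2 (by omega), hc 3 (by omega)]
      rw [hlist, chunks]
      exact (List.Perm.append ih (hperm.map _)).trans List.perm_append_comm
  have key : ∀ m, m ≤ k →
      (chunks W m).Pairwise (· ≥ ·) ∧ (chunks W m).alternatingSum = 8 * m := by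
    intro m hm
    induction m with
    | zero => simp [chunks]
    | succ m ih =>
      obtain ⟨ihs, iha⟩ := ih (by omega)
      constructor
      · rw [chunks, List.pairwise_append]
        refine ⟨?_, ihs, ?_⟩
        · exact List.Pairwise.map _ (fun a c h => add_le_add_right h _) hsort
        · intro x hx y hy
          obtain ⟨s, hs, hyW⟩ := mem_chunks hy
          have h1 := hWmem m x hx
          have h2 := hWmem s y hyW
          have h3 : b s < b m := hmono m (by omega) s hs
          have h4 : (b s : ℤ) < (b m : ℤ) := by exact_mod_cast h3
          simp only [ge_iff_le]
          omega
      · have hlw : w.length = 4 := by simpa using hperm.length_eq.symm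
        obtain ⟨w0, w1, w2, w3, rfl⟩ : ∃ a c d e, w = [a, c, d, e] := by
          rcases w with _ | ⟨a, _ | ⟨c, _ | ⟨d, _ | ⟨e, _ | ⟨f, t⟩⟩⟩⟩⟩ <;>
            simp_all
        have h8 : w0 - w1 + (w2 - w3) = 8 := by
          simp [List.alternatingSum_cons_cons] at halt
          omega
        have hWm : W m = [16 * (b m : ℤ) + w0, 16 * (b m : ℤ) + w1,
            16 * (b m : ℤ) + w2, 16 * (b m : ℤ) + w3] := by simp [hW]
        rw [chunks, hWm]
        simp only [List.cons_append, List.nil_append, List.alternatingSum_cons_cons, iha]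
        push_cast
        omega
  obtain ⟨h2, h3⟩ := key k le_rfl
  rw [res_eq_of_perm_sorted (hmap k) h2, h3]

end MagicSubAux

open MagicSubAux in
/-- For every `k ≥ 1` there exists a normal magic square of subtraction of order `4k`
with residuum `8k`. -/
theorem exists_doubly_even_square (k : ℕ) (hk : 1 ≤ k) :
    ∃ M : ℕ → ℕ → ℤ, IsMagicSubSquare (4 * k) M (8 * (k : ℤ)) := by
  set M : ℕ → ℕ → ℤ := fun i j =>
    16 * ((k * ((i - 1) / 4) + (j - 1) / 4 : ℕ) : ℤ) + T ((i - 1) % 4) ((j - 1) % 4) with hM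
  refine ⟨M, ?_, ?_, ?_, ?_, ?_⟩
  · -- entries
    have hinj : Set.InjOn (fun p : ℕ × ℕ => M p.1 p.2)
        ↑(Finset.Icc 1 (4 * k) ×ˢ Finset.Icc 1 (4 * k)) := by
      rintro ⟨i, j⟩ hij ⟨i', j'⟩ hij' he
      simp only [Finset.coe_product, Set.mem_prod, Finset.mem_coe, Finset.mem_Icc] at hij hij'
      obtain ⟨⟨hi1, hi2⟩, hj1, hj2⟩ := hij
      obtain ⟨⟨hi1', hi2'⟩, hj1', hj2'⟩ := hij'
      simp only [hM] at he
      have hT1 := T_bd ((i - 1) % 4) (by omega) ((j - 1) % 4) (by omega)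
      have hT2 := T_bd ((i' - 1) % 4) (by omega) ((j' - 1) % 4) (by omega)
      set A := k * ((i - 1) / 4) + (j - 1) / 4 with hA
      set B := k * ((i' - 1) / 4) + (j' - 1) / 4 with hB
      have hABeq : A = B := by omega
      have hTeq : T ((i - 1) % 4) ((j - 1) % 4) = T ((i' - 1) % 4) ((j' - 1) % 4) := by omega
      obtain ⟨hr, hs⟩ := T_inj _ (Finset.mem_range.mpr (by omega)) _ (Finset.mem_range.mpr (by omega))
        _ (Finset.mem_range.mpr (by omega)) _ (Finset.mem_range.mpr (by omega)) hTeq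
      have hJ : (j - 1) / 4 < k := by omega
      have hJ' : (j' - 1) / 4 < k := by omega
      have hI : (i - 1) / 4 = (i' - 1) / 4 := by
        have h1 : A / k = (i - 1) / 4 := by
          rw [hA, Nat.mul_add_div (by omega), Nat.div_eq_of_lt hJ, Nat.add_zero]
        have h2 : B / k = (i' - 1) / 4 := by
          rw [hB, Nat.mul_add_div (by omega), Nat.div_eq_of_lt hJ', Nat.add_zero]
        rw [← h1, ← h2, hABeq]
      have hJeq : (j - 1) / 4 = (j' - 1) / 4 := by
        have h1 : A % k = (j - 1) / 4 := by
          rw [hA, Nat.mul_add_mod, Nat.mod_eq_of_lt hJ]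
        have h2 : B % k = (j' - 1) / 4 := by
          rw [hB, Nat.mul_add_mod, Nat.mod_eq_of_lt hJ']
        rw [← h1, ← h2, hABeq]
      have : i = i' ∧ j = j' := by omega
      simp [Prod.ext_iff, this.1, this.2]
    have hsub : Finset.image (fun p : ℕ × ℕ => M p.1 p.2)
        (Finset.Icc 1 (4 * k) ×ˢ Finset.Icc 1 (4 * k))
        ⊆ Finset.Icc (1 : ℤ) (((4 * k : ℕ) : ℤ) ^ 2) := by
      intro v hv
      obtain ⟨⟨i, j⟩, hmem, rfl⟩ := Finset.mem_image.mp hv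
      simp only [Finset.mem_product, Finset.mem_Icc] at hmem
      obtain ⟨⟨hi1, hi2⟩, hj1, hj2⟩ := hmem
      have hT1 := T_bd ((i - 1) % 4) (by omega) ((j - 1) % 4) (by omega)
      have hI : (i - 1) / 4 ≤ k - 1 := by omega
      have hJ : (j - 1) / 4 ≤ k - 1 := by omega
      have h1 : k * ((i - 1) / 4) ≤ k * (k - 1) := Nat.mul_le_mul_left k hI
      have h2 : k * (k - 1) + k = k * k := by
        rw [← Nat.mul_succ]
        congr 1
        omega
      have h3 : ((4 * k : ℕ) : ℤ) ^ 2 = 16 * ((k * k : ℕ) : ℤ) := by push_cast; ring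
      simp only [hM, Finset.mem_Icc, h3]
      omega
    have hcard : (Finset.Icc (1 : ℤ) (((4 * k : ℕ) : ℤ) ^ 2)).card
        ≤ (Finset.image (fun p : ℕ × ℕ => M p.1 p.2)
          (Finset.Icc 1 (4 * k) ×ˢ Finset.Icc 1 (4 * k))).card := by
      rw [Finset.card_image_of_injOn hinj, Finset.card_product, Nat.card_Icc]
      have h3 : ((4 * k : ℕ) : ℤ) ^ 2 = 16 * ((k * k : ℕ) : ℤ) := by push_cast; ring
      rw [h3, Int.card_Icc]
      have h4 : (4 * k + 1 - 1) * (4 * k + 1 - 1) = 16 * (k * k) := by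
        have : 4 * k + 1 - 1 = 4 * k := by omega
        rw [this]; ring
      omega
    have himg := Finset.eq_of_subset_of_card_le hsub hcard
    calc ((Finset.Icc 1 (4 * k) ×ˢ Finset.Icc 1 (4 * k)).val.map fun p : ℕ × ℕ => M p.1 p.2)
        = (Finset.image (fun p : ℕ × ℕ => M p.1 p.2)
            (Finset.Icc 1 (4 * k) ×ˢ Finset.Icc 1 (4 * k))).val :=
          (Finset.image_val_of_injOn hinj).symm
      _ = (Finset.Icc (1 : ℤ) (((4 * k : ℕ) : ℤ) ^ 2)).val := by rw [himg]
  · -- rows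
    intro i hi
    rw [Finset.mem_Icc] at hi
    have hrow : rowList (4 * k) M i
        = (List.range (4 * k)).map fun j =>
            16 * ((k * ((i - 1) / 4) + j / 4 : ℕ) : ℤ) + T ((i - 1) % 4) (j % 4) := by
      unfold rowList
      apply List.map_congr_left
      intro j hj
      simp [hM]
    have hb : ∀ t, t + 1 < k → k * ((i - 1) / 4) + t < k * ((i - 1) / 4) + (t + 1) := by
      intro t ht; omega
    have hr4 : (i - 1) % 4 = 0 ∨ (i - 1) % 4 = 1 ∨ (i - 1) % 4 = 2 ∨ (i - 1) % 4 = 3 := by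
      omega
    rw [hrow]
    rcases hr4 with h | h | h | h <;> rw [h]
    · exact res_line_s18 k (fun t => k * ((i - 1) / 4) + t) hb (fun s => T 0 s)
        [10, 3, 2, 1] (by decide) (by decide) (by decide) (by decide)
    · exact res_line_s18 k (fun t => k * ((i - 1) / 4) + t) hb (fun s => T 1 s)
        [15, 12, 11, 6] (by decide) (by decide) (by decide) (by decide)
    · exact res_line_s18 k (fun t => k * ((i - 1) / 4) + t) hb (fun s => T 2 s)
        [16, 13, 9, 4] (by decide) (by decide) (by decide) (by decide)
    · exact res_line_s18 k (fun t => k * ((i - 1) / 4) + t) hb (fun s => T 3 s)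
        [14, 8, 7, 5] (by decide) (by decide) (by decide) (by decide)
  · -- columns
    intro j hj
    rw [Finset.mem_Icc] at hj
    have hcol : colList (4 * k) M j
        = (List.range (4 * k)).map fun i =>
            16 * ((k * (i / 4) + (j - 1) / 4 : ℕ) : ℤ) + T (i % 4) ((j - 1) % 4) := by
      unfold colList
      apply List.map_congr_left
      intro i hi
      simp [hM]
    have hb : ∀ t, t + 1 < k → k * t + (j - 1) / 4 < k * (t + 1) + (j - 1) / 4 := by
      intro t ht
      have h1 : k * (t + 1) = k * t + k := Nat.mul_succ k t
      omega
    have hs4 : (j - 1) % 4 = 0 ∨ (j - 1) % 4 = 1 ∨ (j - 1) % 4 = 2 ∨ (j - 1) % 4 = 3 := by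
      omega
    rw [hcol]
    rcases hs4 with h | h | h | h <;> rw [h]
    · exact res_line_s18 k (fun t => k * t + (j - 1) / 4) hb (fun s => T s 0)
        [13, 12, 8, 1] (by decide) (by decide) (by decide) (by decide)
    · exact res_line_s18 k (fun t => k * t + (j - 1) / 4) hb (fun s => T s 1)
        [16, 11, 5, 2] (by decide) (by decide) (by decide) (by decide)
    · exact res_line_s18 k (fun t => k * t + (j - 1) / 4) hb (fun s => T s 2)
        [14, 9, 6, 3] (by decide) (by decide) (by decide) (by decide)
    · exact res_line_s18 k (fun t => k * t + (j - 1) / 4) hb (fun s => T s 3)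
        [15, 10, 7, 4] (by decide) (by decide) (by decide) (by decide)
  · -- diagonal
    have hdiag : diagList (4 * k) M
        = (List.range (4 * k)).map fun i =>
            16 * ((k * (i / 4) + i / 4 : ℕ) : ℤ) + T (i % 4) (i % 4) := by
      unfold diagList
      apply List.map_congr_left
      intro i hi
      simp [hM]
    have hb : ∀ t, t + 1 < k → k * t + t < k * (t + 1) + (t + 1) := by
      intro t ht
      have h1 : k * (t + 1) = k * t + k := Nat.mul_succ k t
      omega
    rw [hdiag]
    exact res_line_s18 k (fun t => k * t + t) hb (fun s => T s s)
      [11, 9, 7, 1] (by decide) (by decide) (by decide) (by decide)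
  · -- antidiagonal
    have hadiag : adiagList (4 * k) M
        = (List.range (4 * k)).map fun i =>
            16 * ((k * (i / 4) + (k - 1 - i / 4) : ℕ) : ℤ) + T (i % 4) (3 - i % 4) := by
      unfold adiagList
      apply List.map_congr_left
      intro i hi
      rw [List.mem_range] at hi
      have h0 : 4 * k - i - 1 = 4 * k - 1 - i := by omega
      have h1 : (4 * k - i - 1) / 4 = k - 1 - i / 4 := by omega
      have h2 : (4 * k - i - 1) % 4 = 3 - i % 4 := by omega
      simp only [hM]
      have h3 : i + 1 - 1 = i := by omega
      rw [h3]
      rw [show 4 * k - i - 1 = 4 * k - i - 1 from rfl] at h1 h2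
      rw [show (4 * k - i) - 1 = 4 * k - i - 1 from rfl, h1, h2]
    have hb : ∀ t, t + 1 < k → k * t + (k - 1 - t) < k * (t + 1) + (k - 1 - (t + 1)) := by
      intro t ht
      have h1 : k * (t + 1) = k * t + k := Nat.mul_succ k t
      omega
    rw [hadiag]
    exact res_line_s18 k (fun t => k * t + (k - 1 - t)) hb (fun s => T s (3 - s))
      [16, 10, 8, 6] (by decide) (by decide) (by decide) (by decide)
end
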